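/- arXiv:2605.17529 — 8 statements merged into one kernel-verified Lean document; each statement's English description precedes it below -/
import Mathlib

section
/- Let λ ∈ ℝ be irrational, and define f₁(t) = t^{3/2} and f₂(t) = λ t^{3/2} + t for t > 0. Then for every function F of the form F = Σ_{m=0}^{M} a_m f₁^{(m)} + Σ_{m=0}^{M} b_m f₂^{(m)}, where M ≥ 0 and all a_m, b_m ∈ ℤ (with f^{(m)} denoting the m-th derivative), either F(t) → 0 as t → ∞ or |F(t)| → ∞ as t → ∞. -/
open Filter

/-- Distance from a real number to the nearest integer. -/
noncomputable def distNearestInt (x : ℝ) : ℝ := |x - round x|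

/-- A set of naturals is thick if it contains arbitrarily long blocks of
consecutive integers. -/
def Thick (S : Set ℕ) : Prop := ∀ L : ℕ, ∃ N : ℕ, ∀ j : ℕ, j ≤ L → N + j ∈ S

/-- A set of naturals is syndetic if it has bounded gaps. -/
def Syndetic (S : Set ℕ) : Prop :=
  ∃ G : ℕ, 0 < G ∧ ∀ a : ℕ, ∃ n ∈ S, a ≤ n ∧ n < a + G

/-- A set is piecewise syndetic if it is the intersection of a thick set and a
syndetic set. -/
def PiecewiseSyndetic (S : Set ℕ) : Prop :=
  ∃ T B : Set ℕ, Thick T ∧ Syndetic B ∧ S = T ∩ B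

open Classical in
/-- The number of elements of `E ∩ {1, …, N}`. -/
noncomputable def countIn (E : Set ℕ) (N : ℕ) : ℕ :=
  ((Finset.Icc 1 N).filter (fun n => n ∈ E)).card

/-- `E` has a natural density that exists and is positive. -/
def PosDensity (E : Set ℕ) : Prop :=
  ∃ d : ℝ, 0 < d ∧
    Tendsto (fun N : ℕ => (countIn E N : ℝ) / (N : ℝ)) atTop (nhds d)

/-- The return-time set `R_u(E) = {n : ∃ m ∈ E, m + u n ∈ E}`. -/
def retSet (u : ℕ → ℤ) (E : Set ℕ) : Set ℕ :=
  {n : ℕ | ∃ m m' : ℕ, m ∈ E ∧ m' ∈ E ∧ (m' : ℤ) = (m : ℤ) + u n}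

/-- The return-time set along the floor of a real-valued function. -/
noncomputable def retSetFloor (f : ℝ → ℝ) (E : Set ℕ) : Set ℕ :=
  retSet (fun n => ⌊f (n : ℝ)⌋) E

/-- The return-time set along the closest integer to a real-valued function. -/
noncomputable def retSetRound (f : ℝ → ℝ) (E : Set ℕ) : Set ℕ :=
  retSet (fun n => round (f (n : ℝ))) E

/-! For `t > 0` the `m`-th derivative of `t ^ r` is `c_m t ^ (r - m)` with
`c_m = r (r - 1) ⋯ (r - m + 1)`, which is nonzero for `r = 3/2`, and the `m`-th derivative of
`λ t ^ r + t` is `λ c_m t ^ (r - m)` plus `t`, `1` or `0`, a lower-order term when `r > 1`.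
Let `k` be the least index with `(a_k, b_k) ≠ 0`. Then `F t / t ^ (3/2 - k)` tends to
`(a_k + λ b_k) c_k`, which is nonzero because `λ` is irrational. As `3/2 - k` is never `0`,
`|F| → ∞` when `k ≤ 1` and `F → 0` when `k ≥ 2`. -/

open Topology

lemma tendsto_iteratedDeriv_rpow_div_rpow (r : ℝ) {k m : ℕ} (hkm : k ≤ m) :
    Tendsto (fun t : ℝ => iteratedDeriv m (fun s => s ^ r) t / t ^ (r - k)) atTop
      (𝓝 (if m = k then (descPochhammer ℝ k).eval r else 0)) := by
  have hratio : (fun t : ℝ => (descPochhammer ℝ m).eval r * t ^ (-((m : ℝ) - k))) =ᶠ[atTop]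
      fun t => iteratedDeriv m (fun s => s ^ r) t / t ^ (r - k) := by
    filter_upwards [eventually_gt_atTop 0] with t ht
    rw [iteratedDeriv_eq_iterate, Real.iter_deriv_rpow_const, mul_div_assoc, ← Real.rpow_sub ht]
    ring_nf
  refine Tendsto.congr' hratio ?_
  obtain rfl | hlt := hkm.eq_or_lt
  · simp
  · have hpos : (0 : ℝ) < m - k := sub_pos.2 (by exact_mod_cast hlt)
    simpa [hlt.ne'] using (tendsto_rpow_neg_atTop hpos).const_mul ((descPochhammer ℝ m).eval r)

lemma tendsto_iteratedDeriv_id_div_rpow {r : ℝ} (hr : 1 < r) {k m : ℕ} (hkm : k ≤ m) :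
    Tendsto (fun t : ℝ => iteratedDeriv m (fun s => s) t / t ^ (r - k)) atTop (𝓝 0) := by
  rcases m with _ | _ | m
  · obtain rfl : k = 0 := by omega
    refine (tendsto_rpow_neg_atTop (sub_pos.2 hr)).congr' ?_
    filter_upwards [eventually_gt_atTop 0] with t ht
    rw [iteratedDeriv_zero, Nat.cast_zero, sub_zero, Real.rpow_neg ht.le,
      Real.rpow_sub_one ht.ne', inv_div]
  · have hk : (k : ℝ) ≤ 1 := by exact_mod_cast hkm
    refine (tendsto_rpow_neg_atTop (by linarith : (0 : ℝ) < r - k)).congr' ?_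
    filter_upwards [eventually_gt_atTop 0] with t ht
    rw [iteratedDeriv_fun_id, Real.rpow_neg ht.le]
    simp
  · simp [iteratedDeriv_fun_id]

lemma iteratedDeriv_const_mul_rpow_add_id {r t : ℝ} (ht : t ≠ 0) (lam : ℝ) (m : ℕ) :
    iteratedDeriv m (fun s => lam * s ^ r + s) t =
      lam * iteratedDeriv m (fun s => s ^ r) t + iteratedDeriv m (fun s => s) t := by
  rw [iteratedDeriv_fun_add (contDiffAt_const.mul (Real.contDiffAt_rpow_const (Or.inl ht)))
    contDiffAt_fun_id, iteratedDeriv_const_mul_field]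

lemma tendsto_iteratedDeriv_const_mul_rpow_add_id_div_rpow {r : ℝ} (hr : 1 < r) (lam : ℝ)
    {k m : ℕ} (hkm : k ≤ m) :
    Tendsto (fun t : ℝ => iteratedDeriv m (fun s => lam * s ^ r + s) t / t ^ (r - k)) atTop
      (𝓝 (if m = k then lam * (descPochhammer ℝ k).eval r else 0)) := by
  have hsum := ((tendsto_iteratedDeriv_rpow_div_rpow r hkm).const_mul lam).add
    (tendsto_iteratedDeriv_id_div_rpow hr hkm)
  rw [add_zero, mul_ite, mul_zero] at hsum
  refine hsum.congr' ?_
  filter_upwards [eventually_gt_atTop 0] with t ht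
  rw [iteratedDeriv_const_mul_rpow_add_id ht.ne', add_div, mul_div_assoc]

lemma tendsto_sum_mul_div_of_leading {α : Type*} {l : Filter α} {g : ℕ → α → ℝ} {w : α → ℝ}
    {c : ℕ → ℝ} {s : Finset ℕ} {k : ℕ} {L : ℝ} (hk : k ∈ s) (hc : ∀ m < k, c m = 0)
    (hg : ∀ m, k ≤ m → Tendsto (fun t => g m t / w t) l (𝓝 (if m = k then L else 0))) :
    Tendsto (fun t => (∑ m ∈ s, c m * g m t) / w t) l (𝓝 (c k * L)) := by
  have hterm : ∀ m ∈ s, Tendsto (fun t => c m * g m t / w t) l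
      (𝓝 (if m = k then c k * L else 0)) := by
    intro m _
    rcases lt_or_ge m k with hmk | hkm
    · simpa [hc m hmk, hmk.ne] using tendsto_const_nhds
    · have := (hg m hkm).const_mul (c m)
      simp_rw [mul_div_assoc]
      split_ifs at this ⊢ with hm
      · rwa [hm] at this ⊢
      · rwa [mul_zero] at this
  simpa [Finset.sum_div, hk] using tendsto_finsetSum s hterm

lemma tendsto_sum_iteratedDeriv_div_rpow {r : ℝ} (hr : 1 < r) (lam : ℝ) {I : Finset ℕ}
    (a b : ℕ → ℝ) {k : ℕ} (hk : k ∈ I) (ha : ∀ m < k, a m = 0) (hb : ∀ m < k, b m = 0) :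
    Tendsto (fun t : ℝ => ((∑ m ∈ I, a m * iteratedDeriv m (fun s => s ^ r) t) +
        ∑ m ∈ I, b m * iteratedDeriv m (fun s => lam * s ^ r + s) t) / t ^ (r - k)) atTop
      (𝓝 ((a k + lam * b k) * (descPochhammer ℝ k).eval r)) := by
  have h₁ := tendsto_sum_mul_div_of_leading hk ha fun m hkm =>
    tendsto_iteratedDeriv_rpow_div_rpow r hkm
  have h₂ := tendsto_sum_mul_div_of_leading hk hb fun m hkm =>
    tendsto_iteratedDeriv_const_mul_rpow_add_id_div_rpow hr lam hkm
  simp_rw [add_div]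
  convert h₁.add h₂ using 2
  ring

lemma descPochhammer_eval_ne_zero {R : Type*} [CommRing R] [NoZeroDivisors R] [Nontrivial R]
    {r : R} (hr : ∀ j : ℕ, r ≠ j) (k : ℕ) : (descPochhammer R k).eval r ≠ 0 := by
  rw [descPochhammer_eval_eq_prod_range, Finset.prod_ne_zero_iff]
  exact fun j _ => sub_ne_zero.2 (hr j)

lemma Irrational.intCast_add_mul_intCast_ne_zero {x : ℝ} (hx : Irrational x) {a b : ℤ}
    (hab : a ≠ 0 ∨ b ≠ 0) : (a : ℝ) + x * b ≠ 0 := by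
  by_cases hb : b = 0
  · simpa [hb] using hab
  · exact ((hx.mul_intCast hb).intCast_add a).ne_zero

lemma tendsto_abs_atTop_of_tendsto_div {α : Type*} {l : Filter α} {F w : α → ℝ} {c : ℝ}
    (hc : c ≠ 0) (hw : Tendsto w l atTop) (h : Tendsto (fun t => F t / w t) l (𝓝 c)) :
    Tendsto (fun t => |F t|) l atTop := by
  refine hw.num (abs_pos.2 hc) (h.abs.congr' ?_)
  filter_upwards [hw.eventually_gt_atTop 0] with t ht
  rw [abs_div, abs_of_pos ht]

lemma tendsto_zero_of_tendsto_div {α K : Type*} [DivisionRing K] [TopologicalSpace K]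
    [ContinuousMul K] {l : Filter α} {F w : α → K} {c : K} (hw : Tendsto w l (𝓝 0))
    (hw₀ : ∀ᶠ t in l, w t ≠ 0) (h : Tendsto (fun t => F t / w t) l (𝓝 c)) :
    Tendsto F l (𝓝 0) := by
  rw [← mul_zero c]
  refine (h.mul hw).congr' ?_
  filter_upwards [hw₀] with t ht
  exact div_mul_cancel₀ (F t) ht

lemma tendsto_zero_or_tendsto_abs_atTop_of_tendsto_div_rpow {F : ℝ → ℝ} {p c : ℝ}
    (hp : p ≠ 0) (hc : c ≠ 0) (h : Tendsto (fun t => F t / t ^ p) atTop (𝓝 c)) :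
    Tendsto F atTop (𝓝 0) ∨ Tendsto (fun t => |F t|) atTop atTop := by
  rcases hp.lt_or_gt with hp | hp
  · left
    refine tendsto_zero_of_tendsto_div ?_ ?_ h
    · simpa using tendsto_rpow_neg_atTop (neg_pos.2 hp)
    · filter_upwards [eventually_gt_atTop 0] with t ht
      exact (Real.rpow_pos_of_pos ht _).ne'
  · exact .inr (tendsto_abs_atTop_of_tendsto_div hc (tendsto_rpow_atTop hp) h)

/-- Theorem (i) of Theorem 1.4 (main): for f₁(t) = t^{3/2} and
f₂(t) = λ t^{3/2} + t with λ irrational, every integer combination of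
derivatives of f₁, f₂ tends to 0 or to ∞ in absolute value. -/
theorem stmt_0 (lam : ℝ) (hlam : Irrational lam)
    (f₁ f₂ : ℝ → ℝ)
    (hf₁ : ∀ t : ℝ, f₁ t = t ^ ((3 : ℝ) / 2))
    (hf₂ : ∀ t : ℝ, f₂ t = lam * t ^ ((3 : ℝ) / 2) + t)
    (M : ℕ) (a b : ℕ → ℤ) (F : ℝ → ℝ)
    (hF : ∀ t : ℝ, F t =
      (∑ m ∈ Finset.range (M + 1), (a m : ℝ) * iteratedDeriv m f₁ t) +
      (∑ m ∈ Finset.range (M + 1), (b m : ℝ) * iteratedDeriv m f₂ t)) :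
    Tendsto F atTop (nhds 0) ∨ Tendsto (fun t => |F t|) atTop atTop := by
  obtain rfl : f₁ = fun s => s ^ ((3 : ℝ) / 2) := funext hf₁
  obtain rfl : f₂ = fun s => lam * s ^ ((3 : ℝ) / 2) + s := funext hf₂
  obtain rfl := funext hF
  by_cases hzero : ∃ m ≤ M, a m ≠ 0 ∨ b m ≠ 0
  swap
  · push Not at hzero
    left
    refine tendsto_const_nhds.congr fun t => ?_
    rw [Finset.sum_eq_zero, Finset.sum_eq_zero, add_zero] <;>
      intro m hm <;> simp [hzero m (Finset.mem_range_succ_iff.1 hm)]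
  obtain ⟨k, ⟨hkM, hk⟩, hmin⟩ :
      ∃ k, (k ≤ M ∧ (a k ≠ 0 ∨ b k ≠ 0)) ∧ ∀ m < k, a m = 0 ∧ b m = 0 :=
    ⟨Nat.find hzero, Nat.find_spec hzero, fun m hm => by
      simpa [(hm.trans_le (Nat.find_spec hzero).1).le] using Nat.find_min hzero hm⟩
  have hlim := tendsto_sum_iteratedDeriv_div_rpow (r := 3 / 2) (by norm_num) lam
    (fun m => (a m : ℝ)) (fun m => (b m : ℝ)) (Finset.mem_range_succ_iff.2 hkM)
    (fun m hm => by simp [(hmin m hm).1]) (fun m hm => by simp [(hmin m hm).2])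
  have hr : ∀ j : ℕ, (3 / 2 : ℝ) ≠ j := fun j h => by
    have : (3 : ℝ) = 2 * j := by linarith
    norm_cast at this
    omega
  have hne := mul_ne_zero (hlam.intCast_add_mul_intCast_ne_zero hk)
    (descPochhammer_eval_ne_zero hr k)
  exact tendsto_zero_or_tendsto_abs_atTop_of_tendsto_div_rpow (sub_ne_zero.2 (hr k)) hne hlim
end

section
/- Let λ ∈ ℝ be irrational, let ξ ∈ ℝ \ ℤ, and let L ∈ ℕ satisfy L·‖ξ‖ > 1 + |λ|, where ‖·‖ is the distance to the nearest integer. Define g₁(t) = t^{3/2} and g₂(t) = λ t^{3/2} + L(t + ξ) for t > 0. Then for every function F of the form F = Σ_{m=0}^{M} a_m g₁^{(m)} + Σ_{m=0}^{M} b_m g₂^{(m)}, where M ≥ 0 and all a_m, b_m ∈ ℤ, either F(t) → 0 as t → ∞ or |F(t)| → ∞ as t → ∞. -/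
open Filter

/-!
On `t > 0` the `m`-th derivative of `t ^ (3/2)` is `(3/2)_m t ^ (3/2 - m)` with the falling
factorial `(3/2)_m ≠ 0`, while `L (t + ξ)` contributes only to `m ≤ 1`. Hence
`F t = ∑ₘ (aₘ + λ bₘ) (3/2)_m t ^ (3/2 - m) + b₀ L t + (b₀ L ξ + b₁ L)`, the last summand only
when `M ≥ 1`. As `λ` is irrational, the coefficient of `t ^ (3/2 - m)` vanishes only when
`aₘ = bₘ = 0`. So either `t ^ (3/2)` dominates; or `b₀ = 0` and `t ^ (1/2)` dominates the
constant `b₁ L`; or `b₀ = b₁ = 0` and only negative powers of `t` remain, so `F → 0`.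
-/

open Finset Topology

lemma iteratedDeriv_add_two_affine (c d : ℝ) (m : ℕ) :
    iteratedDeriv (m + 2) (fun s : ℝ => c * s + d) = 0 := by
  rw [iteratedDeriv_succ', iteratedDeriv_succ']
  have : deriv (fun s : ℝ => c * s + d) = fun _ => c := by ext; simp
  rw [this, deriv_const']
  ext; simp

lemma sum_range_mul_iteratedDeriv_affine (c d : ℝ) (b : ℕ → ℝ) (M : ℕ) (t : ℝ) :
    ∑ m ∈ range (M + 1), b m * iteratedDeriv m (fun s : ℝ => c * s + d) t =
      b 0 * (c * t + d) + if M = 0 then 0 else b 1 * c := by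
  rcases M with _ | M
  · simp
  · rw [sum_range_succ', sum_range_succ']
    simp only [iteratedDeriv_add_two_affine]
    simp [add_comm]

lemma iteratedDeriv_rpow_add_affine (p lam c d : ℝ) (m : ℕ) {t : ℝ} (ht : t ≠ 0) :
    iteratedDeriv m (fun s : ℝ => lam * s ^ p + (c * s + d)) t =
      lam * iteratedDeriv m (fun s : ℝ => s ^ p) t +
        iteratedDeriv m (fun s : ℝ => c * s + d) t := by
  have h : ContDiffAt ℝ m (fun s : ℝ => lam * s ^ p) t :=
    contDiffAt_const.mul (Real.contDiffAt_rpow_const_of_ne ht)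
  rw [iteratedDeriv_fun_add h (by fun_prop), iteratedDeriv_const_mul_field]

lemma sum_mul_iteratedDeriv_rpow_add_sum_mul_iteratedDeriv_rpow_add_affine
    (p lam c d : ℝ) (M : ℕ) (a b : ℕ → ℝ) {t : ℝ} (ht : t ≠ 0) :
    (∑ m ∈ range (M + 1), a m * iteratedDeriv m (fun s : ℝ => s ^ p) t) +
      (∑ m ∈ range (M + 1), b m * iteratedDeriv m (fun s : ℝ => lam * s ^ p + (c * s + d)) t) =
      ∑ m ∈ range (M + 1), (a m + lam * b m) * (descPochhammer ℝ m).eval p * t ^ (p - m) +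
        (b 0 * (c * t + d) + if M = 0 then 0 else b 1 * c) := by
  have hpow (m : ℕ) : iteratedDeriv m (fun s : ℝ => s ^ p) t =
      (descPochhammer ℝ m).eval p * t ^ (p - m) := by
    rw [iteratedDeriv_eq_iterate, Real.iter_deriv_rpow_const]
  have hsplit (m : ℕ) : b m * iteratedDeriv m (fun s : ℝ => lam * s ^ p + (c * s + d)) t =
      lam * b m * iteratedDeriv m (fun s : ℝ => s ^ p) t +
        b m * iteratedDeriv m (fun s : ℝ => c * s + d) t := by
    rw [iteratedDeriv_rpow_add_affine p lam c d m ht]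
    ring
  rw [sum_congr rfl fun m _ => hsplit m, sum_add_distrib, sum_range_mul_iteratedDeriv_affine,
    ← add_assoc, ← sum_add_distrib]
  congr 1
  exact sum_congr rfl fun m _ => by rw [hpow]; ring

lemma descPochhammer_eval_ne_zero_s2 {p : ℝ} (hp : ∀ n : ℕ, p ≠ n) (m : ℕ) :
    (descPochhammer ℝ m).eval p ≠ 0 := by
  rw [descPochhammer_eval_eq_prod_range, prod_ne_zero_iff]
  exact fun j _ => sub_ne_zero.2 (hp j)

lemma Irrational.intCast_add_mul_intCast_eq_zero_iff {lam : ℝ} (hlam : Irrational lam)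
    {x y : ℤ} : (x : ℝ) + lam * y = 0 ↔ x = 0 ∧ y = 0 := by
  refine ⟨fun h => ?_, fun ⟨hx, hy⟩ => by simp [hx, hy]⟩
  obtain rfl : y = 0 := by
    by_contra hy
    exact ((hlam.intCast_mul hy).intCast_add x).ne_zero (by rw [mul_comm]; exact h)
  simpa using h

lemma tendsto_abs_atTop_of_tendsto_mul_rpow_neg {f : ℝ → ℝ} {e K : ℝ} (he : 0 < e) (hK : K ≠ 0)
    (h : Tendsto (fun t => f t * t ^ (-e)) atTop (𝓝 K)) :
    Tendsto (fun t => |f t|) atTop atTop := by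
  refine ((tendsto_rpow_atTop he).atTop_mul_pos (abs_pos.2 hK) h.abs).congr' ?_
  filter_upwards [eventually_gt_atTop 0] with t ht
  rw [abs_mul, abs_of_pos (Real.rpow_pos_of_pos ht _), mul_left_comm, ← Real.rpow_add ht,
    add_neg_cancel, Real.rpow_zero, mul_one]

lemma tendsto_const_mul_rpow_nhds_zero_of_neg (c : ℝ) {q : ℝ} (hq : q < 0) :
    Tendsto (fun t : ℝ => c * t ^ q) atTop (𝓝 0) := by
  simpa using (tendsto_rpow_neg_atTop (neg_pos.2 hq)).const_mul c

lemma tendsto_sum_mul_rpow_sub_nhds_zero (K : ℕ → ℝ) (p : ℝ) (N : ℕ)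
    (hK : ∀ m < N, (m : ℝ) ≤ p → K m = 0) :
    Tendsto (fun t : ℝ => ∑ m ∈ range N, K m * t ^ (p - m)) atTop (𝓝 0) := by
  rw [← sum_const_zero (s := range N)]
  refine tendsto_finsetSum _ fun m hm => ?_
  rcases le_or_gt (m : ℝ) p with hmp | hpm
  · simp [hK m (mem_range.1 hm) hmp]
  · exact tendsto_const_mul_rpow_nhds_zero_of_neg _ (sub_neg.2 hpm)

lemma tendsto_sum_mul_rpow_sub_mul_rpow_neg (K : ℕ → ℝ) (p : ℝ) {k N : ℕ} (hkN : k < N)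
    (hK : ∀ m < k, K m = 0) :
    Tendsto (fun t : ℝ => (∑ m ∈ range N, K m * t ^ (p - m)) * t ^ (-(p - k))) atTop
      (𝓝 (K k)) := by
  have hlim : Tendsto (fun t : ℝ => ∑ m ∈ range N, K m * t ^ ((k : ℝ) - m)) atTop
      (𝓝 (∑ m ∈ range N, if m = k then K k else 0)) := by
    refine tendsto_finsetSum _ fun m _ => ?_
    rcases lt_trichotomy m k with hmk | rfl | hkm
    · simp [hK m hmk, hmk.ne]
    · simp
    · simpa [hkm.ne'] using tendsto_const_mul_rpow_nhds_zero_of_neg (K m) (q := (k : ℝ) - m)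
        (sub_neg.2 (by exact_mod_cast hkm))
  rw [sum_ite_eq', if_pos (mem_range.2 hkN)] at hlim
  refine hlim.congr' ?_
  filter_upwards [eventually_gt_atTop 0] with t ht
  rw [sum_mul]
  refine sum_congr rfl fun m _ => ?_
  rw [mul_assoc, ← Real.rpow_add ht]
  ring_nf

lemma tendsto_abs_sum_mul_rpow_sub_add_atTop (K : ℕ → ℝ) (p : ℝ) {k N : ℕ} (hkN : k < N)
    (hkp : (k : ℝ) < p) (hK : ∀ m < k, K m = 0) (hKk : K k ≠ 0) {r : ℝ → ℝ}
    (hr : Tendsto (fun t => r t * t ^ (-(p - k))) atTop (𝓝 0)) :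
    Tendsto (fun t : ℝ => |∑ m ∈ range N, K m * t ^ (p - m) + r t|) atTop atTop :=
  tendsto_abs_atTop_of_tendsto_mul_rpow_neg (sub_pos.2 hkp) hKk <| by
    simpa [add_mul] using (tendsto_sum_mul_rpow_sub_mul_rpow_neg K p hkN hK).add hr

lemma tendsto_affine_mul_rpow_neg_nhds_zero (c d : ℝ) {e : ℝ} (he : 1 < e) :
    Tendsto (fun t : ℝ => (c * t + d) * t ^ (-e)) atTop (𝓝 0) := by
  have h := (tendsto_const_mul_rpow_nhds_zero_of_neg c (q := 1 - e) (by linarith)).add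
    (tendsto_const_mul_rpow_nhds_zero_of_neg d (q := -e) (by linarith))
  rw [add_zero] at h
  refine h.congr' ?_
  filter_upwards [eventually_gt_atTop 0] with t ht
  rw [sub_eq_add_neg, Real.rpow_add ht, Real.rpow_one]
  ring

lemma tendsto_zero_or_tendsto_abs_atTop_of_sum_mul_rpow_sub_add_affine (K : ℕ → ℝ) {N : ℕ}
    (hN : 0 < N) {p : ℝ} (hp₁ : 1 < p) (hp₂ : p < 2) {u v : ℝ} (hu : K 0 = 0 → u = 0)
    (hv : K 0 = 0 → N ≤ 1 ∨ K 1 = 0 → v = 0) :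
    Tendsto (fun t : ℝ => ∑ m ∈ range N, K m * t ^ (p - m) + (u * t + v)) atTop (𝓝 0) ∨
      Tendsto (fun t : ℝ => |∑ m ∈ range N, K m * t ^ (p - m) + (u * t + v)|) atTop atTop := by
  by_cases hK₀ : K 0 = 0
  · obtain rfl := hu hK₀
    by_cases hK₁ : N ≤ 1 ∨ K 1 = 0
    · left
      obtain rfl := hv hK₀ hK₁
      simp only [zero_mul, add_zero]
      refine tendsto_sum_mul_rpow_sub_nhds_zero K p N fun m hm hmp => ?_
      have : m < 2 := by exact_mod_cast hmp.trans_lt hp₂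
      interval_cases m
      exacts [hK₀, hK₁.resolve_left (by omega)]
    · right
      obtain ⟨hN₁, hK₁⟩ := not_or.1 hK₁
      refine tendsto_abs_sum_mul_rpow_sub_add_atTop K p (k := 1) (by omega) (by simpa using hp₁)
        (by simpa using hK₀) hK₁ ?_
      simpa using tendsto_const_mul_rpow_nhds_zero_of_neg v (q := -(p - 1)) (by linarith)
  · right
    exact tendsto_abs_sum_mul_rpow_sub_add_atTop K p hN (by simpa using hp₁.trans' one_pos)
      (by simp) hK₀ (by simpa using tendsto_affine_mul_rpow_neg_nhds_zero u v hp₁)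

theorem stmt_2_general (lam ξ : ℝ) (hlam : Irrational lam)
    (L : ℕ)
    (g₁ g₂ : ℝ → ℝ)
    (hg₁ : ∀ t : ℝ, g₁ t = t ^ ((3 : ℝ) / 2))
    (hg₂ : ∀ t : ℝ, g₂ t = lam * t ^ ((3 : ℝ) / 2) + (L : ℝ) * (t + ξ))
    (M : ℕ) (a b : ℕ → ℤ) (F : ℝ → ℝ)
    (hF : ∀ t : ℝ, F t =
      (∑ m ∈ Finset.range (M + 1), (a m : ℝ) * iteratedDeriv m g₁ t) +
      (∑ m ∈ Finset.range (M + 1), (b m : ℝ) * iteratedDeriv m g₂ t)) :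
    Tendsto F atTop (nhds 0) ∨ Tendsto (fun t => |F t|) atTop atTop := by
  set K : ℕ → ℝ := fun m => ((a m : ℝ) + lam * b m) * (descPochhammer ℝ m).eval (3 / 2)
  have hK (m : ℕ) : K m = 0 ↔ a m = 0 ∧ b m = 0 := by
    have h32 (n : ℕ) : (3 / 2 : ℝ) ≠ n := fun h => by
      have : (3 : ℕ) = 2 * n := by exact_mod_cast (by linarith : (3 : ℝ) = 2 * n)
      omega
    simp only [K, mul_eq_zero, descPochhammer_eval_ne_zero_s2 h32, or_false,
      hlam.intCast_add_mul_intCast_eq_zero_iff]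
  set v : ℝ := (b 0 : ℝ) * (L * ξ) + if M = 0 then 0 else (b 1 : ℝ) * L
  have hFK : F =ᶠ[atTop] fun t =>
      ∑ m ∈ range (M + 1), K m * t ^ ((3 : ℝ) / 2 - m) + ((b 0 : ℝ) * L * t + v) := by
    filter_upwards [eventually_gt_atTop 0] with t ht
    have hg₂' : g₂ = fun s => lam * s ^ ((3 : ℝ) / 2) + (L * s + L * ξ) := by
      ext s; rw [hg₂]; ring
    rw [hF, funext hg₁, hg₂',
      sum_mul_iteratedDeriv_rpow_add_sum_mul_iteratedDeriv_rpow_add_affine _ _ _ _ _ _ _ ht.ne']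
    ring
  refine (tendsto_zero_or_tendsto_abs_atTop_of_sum_mul_rpow_sub_add_affine K (by omega)
    (by norm_num) (by norm_num) (fun h => by simp [((hK 0).1 h).2]) fun h₀ h₁ => ?_).imp
    (·.congr' hFK.symm) (·.congr' (hFK.fun_comp abs).symm)
  rcases h₁ with hM | h₁
  · simp [v, ((hK 0).1 h₀).2, show M = 0 by omega]
  · simp [v, ((hK 0).1 h₀).2, ((hK 1).1 h₁).2]

/-- Theorem (i) of Theorem 1.5: the integer derivative-span condition for
g₁(t) = t^{3/2}, g₂(t) = λ t^{3/2} + L(t + ξ). -/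
theorem stmt_2 (lam ξ : ℝ) (hlam : Irrational lam) (hξ : ∀ n : ℤ, (n : ℝ) ≠ ξ)
    (L : ℕ) (hL : (1 : ℝ) + |lam| < (L : ℝ) * distNearestInt ξ)
    (g₁ g₂ : ℝ → ℝ)
    (hg₁ : ∀ t : ℝ, g₁ t = t ^ ((3 : ℝ) / 2))
    (hg₂ : ∀ t : ℝ, g₂ t = lam * t ^ ((3 : ℝ) / 2) + (L : ℝ) * (t + ξ))
    (M : ℕ) (a b : ℕ → ℤ) (F : ℝ → ℝ)
    (hF : ∀ t : ℝ, F t =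
      (∑ m ∈ Finset.range (M + 1), (a m : ℝ) * iteratedDeriv m g₁ t) +
      (∑ m ∈ Finset.range (M + 1), (b m : ℝ) * iteratedDeriv m g₂ t)) :
    Tendsto F atTop (nhds 0) ∨ Tendsto (fun t => |F t|) atTop atTop :=
  stmt_2_general lam ξ hlam L g₁ g₂ hg₁ hg₂ M a b F hF
end

section
/- Let λ ∈ ℝ be irrational, let ξ ∈ ℝ \ ℤ, and let L ∈ ℕ satisfy L·‖ξ‖ > 1 + |λ|. Define g₁(t) = t^{3/2} and g₂(t) = λ t^{3/2} + L(t + ξ). Then there exists a set E ⊆ ℕ of positive natural density such that R_{g₁}(E) ∩ R_{g₂}(E) = ∅. -/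
open Filter

/-!
For `δ > 0` the Bohr set `{m : ‖λ m‖ < δ}` is syndetic, so choosing one of its points in each
block of a fixed length and multiplying by `L` gives a set `E` of positive density. If `n` returns
to `E` along `⌊f⌋`, then `⌊f n⌋ = L k` with `‖λ k‖ < 2δ`; writing `θ = ξ - round ξ`, the number
`λ f n + L (n + ξ)` is then congruent modulo `Lℤ` to `L θ + e` with `|e| < 2Lδ + |λ|`. When
`2Lδ ≤ L ‖ξ‖ - 1 - |λ|` this gives `1 ≤ |L θ + e| ≤ L - 1`, so the floor of
`λ f n + L (n + ξ)` is not divisible by `L` and `n` does not return to `E` along it.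
-/

def bohrSet (α δ : ℝ) : Set ℕ := {m | distNearestInt (α * m) < δ}

lemma distNearestInt_le (x : ℝ) (z : ℤ) : distNearestInt x ≤ |x - z| := round_le x z

lemma distNearestInt_neg (x : ℝ) : distNearestInt (-x) = distNearestInt x := by
  refine le_antisymm ?_ ?_
  · calc distNearestInt (-x) ≤ |-x - ((-round x : ℤ) : ℝ)| := distNearestInt_le _ _
      _ = distNearestInt x := by rw [distNearestInt, ← abs_neg]; push_cast; ring_nf
  · calc distNearestInt x ≤ |x - ((-round (-x) : ℤ) : ℝ)| := distNearestInt_le _ _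
      _ = distNearestInt (-x) := by rw [distNearestInt, ← abs_neg]; push_cast; ring_nf

lemma bohrSet_neg (α δ : ℝ) : bohrSet (-α) δ = bohrSet α δ := by
  simp only [bohrSet, neg_mul, distNearestInt_neg]

/-- Walking along `a, a + q, a + 2q, …` moves `α m` by steps of `η = q α - j ∈ (0, δ)` modulo `1`,
so some step of the walk lands within `η` above an integer before it has gone once around. -/
lemma syndetic_bohrSet_of_pos {α δ : ℝ} {q : ℕ} {j : ℤ} (hη : 0 < q * α - j)
    (hηδ : q * α - j < δ) : Syndetic (bohrSet α δ) := by
  set η := q * α - j with hη_def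
  refine ⟨⌈1 / η⌉₊ * q + 1, Nat.succ_pos _, fun a => ?_⟩
  set x := Int.fract (α * a)
  have hx₀ : 0 ≤ x := Int.fract_nonneg _
  have hx₁ : x < 1 := Int.fract_lt_one _
  set k := ⌈(1 - x) / η⌉₊
  have hk_ge : 1 - x ≤ k * η := (div_le_iff₀ hη).1 (Nat.le_ceil _)
  have hk_lt : (k - 1) * η < 1 - x := by
    have := Nat.ceil_lt_add_one (div_nonneg (sub_nonneg.2 hx₁.le) hη.le)
    rw [← lt_div_iff₀ hη]
    linarith
  have hkK : k ≤ ⌈1 / η⌉₊ := Nat.ceil_mono (by gcongr; linarith)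
  refine ⟨a + k * q, ?_, Nat.le_add_right _ _, by nlinarith [Nat.mul_le_mul_right q hkK]⟩
  have hsplit : α * ((a + k * q : ℕ) : ℝ) - ((⌊α * a⌋ + k * j + 1 : ℤ) : ℝ) = x + k * η - 1 := by
    have := Int.floor_add_fract (α * a)
    push_cast
    linear_combination -this + (k : ℝ) * hη_def
  have hdist := distNearestInt_le (α * ((a + k * q : ℕ) : ℝ)) (⌊α * a⌋ + k * j + 1)
  rw [hsplit, abs_of_nonneg (by linarith)] at hdist
  exact hdist.trans_lt (by linarith)

lemma syndetic_of_dvd {S : Set ℕ} {q : ℕ} (hq : 0 < q) (hS : ∀ i, q * i ∈ S) : Syndetic S :=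
  ⟨q + 1, Nat.succ_pos q, fun a =>
    ⟨q * (a / q + 1), hS _, (Nat.lt_mul_div_succ a hq).le, by
      have := Nat.mul_div_le a q
      rw [mul_add_one]
      omega⟩⟩

/-- Dirichlet gives `q > 0` with `‖q α‖ < δ`; the walk along multiples of `q` then reaches the
Bohr set, or `q α ∈ ℤ` and all multiples of `q` lie in it. -/
lemma syndetic_bohrSet (α : ℝ) {δ : ℝ} (hδ : 0 < δ) : Syndetic (bohrSet α δ) := by
  obtain ⟨n, hn⟩ := exists_nat_gt (1 / δ)
  have hn₀ : 0 < n := by exact_mod_cast (one_div_pos.2 hδ).trans hn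
  obtain ⟨q, hq, -, hqα⟩ := Real.exists_nat_abs_mul_sub_round_le α hn₀
  have hηδ : |q * α - round (q * α)| < δ := by
    refine hqα.trans_lt ?_
    rw [div_lt_iff₀ (by positivity)]
    rw [div_lt_iff₀ hδ] at hn
    nlinarith
  rcases lt_trichotomy (q * α - round (q * α)) 0 with hneg | hzero | hpos
  · rw [← bohrSet_neg]
    refine syndetic_bohrSet_of_pos (q := q) (j := -round (q * α)) ?_ ?_ <;>
      · rw [abs_of_neg hneg] at hηδ
        push_cast
        linarith
  · refine syndetic_of_dvd hq fun i => ?_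
    have hint : α * ((q * i : ℕ) : ℝ) = ((round (q * α) * i : ℤ) : ℝ) := by
      push_cast
      linear_combination (i : ℝ) * hzero
    show |_ - _| < δ
    rw [hint, round_intCast, sub_self, abs_zero]
    exact hδ
  · exact syndetic_bohrSet_of_pos hpos (by rwa [abs_of_pos hpos] at hηδ)

lemma tendsto_div_of_abs_sub_mul_le {u : ℕ → ℝ} {d C : ℝ} (h : ∀ N, |u N - N * d| ≤ C) :
    Tendsto (fun N : ℕ => u N / N) atTop (nhds d) := by
  rw [tendsto_iff_norm_sub_tendsto_zero]
  refine squeeze_zero' (Eventually.of_forall fun _ => norm_nonneg _) ?_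
    (tendsto_const_div_atTop_nhds_zero_nat C)
  filter_upwards [eventually_gt_atTop 0] with N hN
  have hN' : (0 : ℝ) < N := by exact_mod_cast hN
  rw [Real.norm_eq_abs, div_sub' hN'.ne', abs_div, abs_of_pos hN']
  exact div_le_div_of_nonneg_right (h N) hN'.le

section Blocks

variable {S : ℕ} {g : ℕ → ℕ}

lemma countIn_range_le (hlow : ∀ j, j * S ≤ g j) (hup : ∀ j, g j < (j + 1) * S) (N : ℕ) :
    countIn (Set.range g) N ≤ N / S + 1 := by
  classical
  calc countIn (Set.range g) N ≤ ((Finset.range (N / S + 1)).image g).card := by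
        refine Finset.card_le_card fun m hm => ?_
        obtain ⟨hmN, j, rfl⟩ := Finset.mem_filter.1 hm
        refine Finset.mem_image_of_mem g (Finset.mem_range.2 (Nat.lt_succ_of_le ?_))
        rw [← Nat.div_eq_of_lt_le (hlow j) (hup j)]
        exact Nat.div_le_div_right (Finset.mem_Icc.1 hmN).2
    _ ≤ N / S + 1 := Finset.card_image_le.trans (Finset.card_range _).le

lemma le_countIn_range (hS : 0 < S) (hlow : ∀ j, j * S ≤ g j) (hup : ∀ j, g j < (j + 1) * S)
    (N : ℕ) : N / S ≤ countIn (Set.range g) N + 1 := by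
  classical
  have hinj : g.Injective := fun i j hij => by
    rw [← Nat.div_eq_of_lt_le (hlow i) (hup i), hij, Nat.div_eq_of_lt_le (hlow j) (hup j)]
  have hsub : (Finset.Ico 1 (N / S)).image g ⊆ (Finset.Icc 1 N).filter (· ∈ Set.range g) := by
    intro m hm
    obtain ⟨j, hj, rfl⟩ := Finset.mem_image.1 hm
    obtain ⟨hj₁, hjN⟩ := Finset.mem_Ico.1 hj
    have h₁ := hlow j
    have h₂ := hup j
    have h₃ : (j + 1) * S ≤ N / S * S := Nat.mul_le_mul_right S hjN
    have h₄ := Nat.div_mul_le_self N S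
    refine Finset.mem_filter.2 ⟨Finset.mem_Icc.2 ⟨?_, by omega⟩, j, rfl⟩
    nlinarith
  have := Finset.card_le_card hsub
  rw [Finset.card_image_of_injective _ hinj, Nat.card_Ico] at this
  unfold countIn
  omega

lemma posDensity_range (hS : 0 < S) (hlow : ∀ j, j * S ≤ g j) (hup : ∀ j, g j < (j + 1) * S) :
    PosDensity (Set.range g) := by
  refine ⟨(S : ℝ)⁻¹, by positivity, tendsto_div_of_abs_sub_mul_le (C := 2) fun N => ?_⟩
  have hS' : (0 : ℝ) < S := by exact_mod_cast hS
  have hfloor : ⌊(N : ℝ) / S⌋₊ = N / S := Nat.floor_div_eq_div N S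
  have h₁ := Nat.floor_le (div_nonneg N.cast_nonneg hS'.le) (a := (N : ℝ) / S)
  have h₂ := Nat.lt_floor_add_one ((N : ℝ) / S)
  have h₃ : (countIn (Set.range g) N : ℝ) ≤ (N / S : ℕ) + 1 := by
    exact_mod_cast countIn_range_le hlow hup N
  have h₄ : ((N / S : ℕ) : ℝ) ≤ countIn (Set.range g) N + 1 := by
    exact_mod_cast le_countIn_range hS hlow hup N
  rw [hfloor] at h₁ h₂
  rw [← div_eq_mul_inv, abs_sub_le_iff]
  constructor <;> linarith

end Blocks

lemma not_dvd_floor_of_one_le_abs {L : ℤ} {t : ℝ} (h₁ : 1 ≤ |t|) (h₂ : |t| ≤ L - 1) :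
    ¬ L ∣ ⌊t⌋ := by
  intro hdvd
  have hne : ⌊t⌋ ≠ 0 := by
    rw [Ne, Int.floor_eq_zero_iff, Set.mem_Ico, not_and_or, not_le, not_lt]
    cases le_abs'.1 h₁ <;> [left; right] <;> linarith
  have hlt : |⌊t⌋| < L := by
    rw [abs_lt]
    constructor
    · have : -(L : ℝ) < ⌊t⌋ := by linarith [Int.sub_one_lt_floor t, neg_abs_le t]
      exact_mod_cast this
    · have : (⌊t⌋ : ℝ) < L := by linarith [Int.floor_le t, le_abs_self t]
      exact_mod_cast this
  exact hne (Int.eq_zero_of_abs_lt_dvd hdvd hlt)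

lemma not_dvd_floor_of_abs_sub_mul_le {L : ℕ} {t θ : ℝ} (hθ : |θ| ≤ 1 / 2)
    (h : |t - L * θ| ≤ L * |θ| - 1) : ¬ (L : ℤ) ∣ ⌊t⌋ := by
  have hLθ : |(L : ℝ) * θ| = L * |θ| := by rw [abs_mul, Nat.abs_cast]
  have h₁ := abs_sub_abs_le_abs_sub ((L : ℝ) * θ) t
  have h₂ := abs_sub_abs_le_abs_sub t ((L : ℝ) * θ)
  rw [abs_sub_comm, hLθ] at h₁
  rw [hLθ] at h₂
  have : (L : ℝ) * |θ| ≤ L * (1 / 2) := mul_le_mul_of_nonneg_left hθ L.cast_nonneg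
  exact not_dvd_floor_of_one_le_abs (by linarith) (by push_cast; linarith)

lemma exists_floor_eq_of_mem_retSetFloor {f : ℝ → ℝ} {E B : Set ℕ} {L n : ℕ}
    (hE : E ⊆ (L * ·) '' B) (hn : n ∈ retSetFloor f E) :
    ∃ a ∈ B, ∃ b ∈ B, ⌊f n⌋ = L * ((b : ℤ) - a) := by
  obtain ⟨m, m', hm, hm', h⟩ := hn
  obtain ⟨a, ha, rfl⟩ := hE hm
  obtain ⟨b, hb, rfl⟩ := hE hm'
  exact ⟨a, ha, b, hb, by push_cast at h; linarith⟩

theorem retSetFloor_inter_retSetFloor_eq_empty (f : ℝ → ℝ) (lam ξ δ : ℝ) (L : ℕ) {E : Set ℕ}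
    (hE : E ⊆ (L * ·) '' bohrSet lam δ)
    (hδ : 2 * L * δ ≤ L * distNearestInt ξ - 1 - |lam|) :
    retSetFloor f E ∩ retSetFloor (fun t => lam * f t + L * (t + ξ)) E = ∅ := by
  rw [Set.eq_empty_iff_forall_notMem]
  rintro n ⟨h₁, h₂⟩
  obtain ⟨a, ha, b, hb, hab⟩ := exists_floor_eq_of_mem_retSetFloor hE h₁
  obtain ⟨a', -, b', -, hab'⟩ := exists_floor_eq_of_mem_retSetFloor hE h₂
  set c := round (lam * b) - round (lam * a)
  set θ := ξ - round ξ
  set t := L * (lam * ((b : ℝ) - a) - c) + lam * Int.fract (f n) + L * θ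
  have hsplit : lam * f n + L * (n + ξ) = ((L * (c + n + round ξ) : ℤ) : ℝ) + t := by
    have hfloor : (⌊f n⌋ : ℝ) = L * ((b : ℝ) - a) := by exact_mod_cast hab
    have := Int.floor_add_fract (f n)
    push_cast
    linear_combination (-lam) * this + lam * hfloor
  have hdvd : (L : ℤ) ∣ ⌊t⌋ := by
    rw [hsplit, Int.floor_intCast_add] at hab'
    exact (dvd_add_right (dvd_mul_right _ _)).1 (hab' ▸ dvd_mul_right _ _)
  have hc : |lam * ((b : ℝ) - a) - c| ≤ 2 * δ := by
    have ha' : |lam * a - round (lam * a)| < δ := ha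
    have hb' : |lam * b - round (lam * b)| < δ := hb
    have hrw : lam * ((b : ℝ) - a) - c =
        (lam * b - round (lam * b)) - (lam * a - round (lam * a)) := by
      push_cast [c]
      ring
    rw [hrw]
    exact (abs_sub _ _).trans (by linarith)
  have hfract : |lam * Int.fract (f n)| ≤ |lam| := by
    rw [abs_mul, abs_of_nonneg (Int.fract_nonneg (f n))]
    exact mul_le_of_le_one_right (abs_nonneg _) (Int.fract_lt_one _).le
  refine not_dvd_floor_of_abs_sub_mul_le (abs_sub_round ξ) ?_ hdvd
  calc |t - L * θ| ≤ L * |lam * ((b : ℝ) - a) - c| + |lam * Int.fract (f n)| := by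
        rw [add_sub_cancel_right]
        exact (abs_add_le _ _).trans (by rw [abs_mul, Nat.abs_cast])
    _ ≤ L * |θ| - 1 := by
        have := mul_le_mul_of_nonneg_left hc L.cast_nonneg
        rw [distNearestInt] at hδ
        linarith

theorem stmt_3_general (lam ξ : ℝ)
    (L : ℕ) (hL : (1 : ℝ) + |lam| < (L : ℝ) * distNearestInt ξ) :
    ∃ E : Set ℕ, PosDensity E ∧
      retSetFloor (fun t => t ^ ((3 : ℝ) / 2)) E ∩
        retSetFloor (fun t => lam * t ^ ((3 : ℝ) / 2) + (L : ℝ) * (t + ξ)) E = ∅ := by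
  have hL₀ : 0 < L := by
    by_contra! h
    rw [Nat.le_zero.1 h, Nat.cast_zero, zero_mul] at hL
    linarith [abs_nonneg lam]
  set δ := ((L : ℝ) * distNearestInt ξ - 1 - |lam|) / (2 * L)
  have hδ : 2 * L * δ = L * distNearestInt ξ - 1 - |lam| := by
    simp only [δ]
    field_simp
  obtain ⟨G, hG, hB⟩ := syndetic_bohrSet lam (δ := δ) (div_pos (by linarith) (by positivity))
  choose g hgB hg_ge hg_lt using fun j => hB (j * G)
  refine ⟨Set.range (L * g ·), posDensity_range (Nat.mul_pos hL₀ hG) (fun j => ?_) (fun j => ?_),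
    retSetFloor_inter_retSetFloor_eq_empty _ lam ξ δ L ?_ hδ.le⟩
  · nlinarith [hg_ge j]
  · nlinarith [hg_lt j]
  · rintro _ ⟨j, rfl⟩
    exact ⟨g j, hgB j, rfl⟩

/-- Theorem (ii) of Theorem 1.5: the common return-time set can be empty. -/
theorem stmt_3 (lam ξ : ℝ) (hlam : Irrational lam) (hξ : ∀ n : ℤ, (n : ℝ) ≠ ξ)
    (L : ℕ) (hL : (1 : ℝ) + |lam| < (L : ℝ) * distNearestInt ξ) :
    ∃ E : Set ℕ, PosDensity E ∧
      retSetFloor (fun t => t ^ ((3 : ℝ) / 2)) E ∩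
        retSetFloor (fun t => lam * t ^ ((3 : ℝ) / 2) + (L : ℝ) * (t + ξ)) E = ∅ :=
  stmt_3_general lam ξ L hL
end

section
/- Let λ ∈ ℝ be irrational and let L ∈ ℕ, L ≥ 1. Define h₁(t) = t^{3/2}, h₂(t) = λ t^{3/2} + L(t + √2), and h₃(t) = t². Then for a polynomial q with integer coefficients, the following are equivalent: (1) there exist real numbers a, b, c, not all zero, such that a·h₁(t) + b·h₂(t) + c·h₃(t) − q(t) → 0 as t → ∞; (2) q(t) = c·t² for some nonzero integer c. -/
open Filter

/-! Substituting `t = s²` turns `t ^ (3/2)` into `s³` and every polynomial in `t` into an even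
polynomial in `s`, so a combination `α t^{3/2} + p(t)` tending to `0` is a polynomial in `s`
tending to `0`, hence zero; its odd part `α s³` and its even part `p(s²)` vanish separately.
For the shadows of `h₁, h₂, h₃` this forces the integer polynomial `q` to equal
`c t² + bL t + bL√2`, and irrationality of `√2` kills `b`, hence also `a`. -/

open Polynomial

lemma Polynomial.eq_zero_of_tendsto_eval_atTop_zero {p : ℝ[X]}
    (h : Tendsto (fun x => p.eval x) atTop (nhds 0)) : p = 0 :=
  leadingCoeff_eq_zero.mp ((tendsto_nhds_iff p).mp h).1

lemma rpow_three_halves_sq {s : ℝ} (hs : 0 ≤ s) : (s ^ 2) ^ ((3 : ℝ) / 2) = s ^ 3 := by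
  rw [← Real.rpow_natCast s 2, ← Real.rpow_natCast s 3, ← Real.rpow_mul hs]
  norm_num

lemma eq_zero_of_tendsto_rpow_three_halves_add_eval {α : ℝ} {p : ℝ[X]}
    (h : Tendsto (fun t => α * t ^ ((3 : ℝ) / 2) + p.eval t) atTop (nhds 0)) :
    α = 0 ∧ p = 0 := by
  have hsq : Tendsto (fun s : ℝ => (C α * X ^ 3 + expand ℝ 2 p).eval s) atTop (nhds 0) := by
    refine (h.comp (tendsto_pow_atTop two_ne_zero)).congr' ?_
    filter_upwards [eventually_ge_atTop 0] with s hs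
    simp [rpow_three_halves_sq hs]
  have hzero := Polynomial.eq_zero_of_tendsto_eval_atTop_zero hsq
  have hα : α = 0 := by
    simpa [coeff_expand two_pos] using congrArg (coeff · 3) hzero
  refine ⟨hα, expand_injective two_pos ?_⟩
  simpa [hα] using hzero

lemma eq_zero_of_intCast_mul_sqrt_two_eq_intCast {m n : ℤ}
    (h : (n : ℝ) * √2 = m) : n = 0 := by
  by_contra hn
  exact (irrational_sqrt_two.intCast_mul hn).ne_int m h

lemma Polynomial.eq_C_mul_X_sq_of_map_intCast {q : ℤ[X]} {c : ℝ}
    (h : q.map (Int.castRingHom ℝ) = C c * X ^ 2) :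
    (q.coeff 2 : ℝ) = c ∧ q = C (q.coeff 2) * X ^ 2 := by
  have hc : (q.coeff 2 : ℝ) = c := by
    simpa using congrArg (coeff · 2) h
  refine ⟨hc, map_injective (Int.castRingHom ℝ) Int.cast_injective ?_⟩
  simp [h, ← hc]

theorem stmt_4_general (lam : ℝ) (L : ℕ) (hL : 1 ≤ L)
    (q : Polynomial ℤ) :
    (∃ a b c : ℝ, ¬(a = 0 ∧ b = 0 ∧ c = 0) ∧
      Tendsto (fun t : ℝ =>
        a * t ^ ((3 : ℝ) / 2)
          + b * (lam * t ^ ((3 : ℝ) / 2) + (L : ℝ) * (t + Real.sqrt 2))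
          + c * t ^ (2 : ℕ)
          - Polynomial.aeval t q) atTop (nhds 0))
    ↔ ∃ c : ℤ, c ≠ 0 ∧ q = Polynomial.C c * Polynomial.X ^ 2 := by
  constructor
  · rintro ⟨a, b, c, hne, htend⟩
    set r := q.map (Int.castRingHom ℝ)
    obtain ⟨hα, hp⟩ := eq_zero_of_tendsto_rpow_three_halves_add_eval (α := a + b * lam)
      (p := C c * X ^ 2 + C (b * L) * X + C (b * L * √2) - r) <| htend.congr fun t => by
        simp [r, ← algebraMap_int_eq, eval_map_algebraMap]; ring
    have hr : r = C c * X ^ 2 + C (b * L) * X + C (b * L * √2) := (sub_eq_zero.mp hp).symm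
    have hq1 : (q.coeff 1 : ℝ) = b * L := by simpa [r] using congrArg (coeff · 1) hr
    have hq0 : (q.coeff 0 : ℝ) = b * L * √2 := by simpa [r] using congrArg (coeff · 0) hr
    have hb : b = 0 := by
      have h1 := eq_zero_of_intCast_mul_sqrt_two_eq_intCast (m := q.coeff 0)
        (n := q.coeff 1) (by rw [hq0, hq1])
      have hL0 : (L : ℝ) ≠ 0 := by positivity
      simpa [h1, hL0] using hq1.symm
    have ha : a = 0 := by simpa [hb] using hα
    obtain ⟨hc2, hq⟩ := Polynomial.eq_C_mul_X_sq_of_map_intCast (q := q) (c := c)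
      (by simpa [hb] using hr)
    refine ⟨q.coeff 2, fun h2 => hne ⟨ha, hb, ?_⟩, hq⟩
    simpa [h2] using hc2.symm
  · rintro ⟨c, hc, rfl⟩
    refine ⟨0, 0, c, fun h => hc (by exact_mod_cast h.2.2), ?_⟩
    simp

/-- The computation of the integer polynomial shadows in Theorem 1.6:
q ∈ 𝒫_ℤ(h₁,h₂,h₃) iff q = c t² with c a nonzero integer. -/
theorem stmt_4 (lam : ℝ) (hlam : Irrational lam) (L : ℕ) (hL : 1 ≤ L)
    (q : Polynomial ℤ) :
    (∃ a b c : ℝ, ¬(a = 0 ∧ b = 0 ∧ c = 0) ∧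
      Tendsto (fun t : ℝ =>
        a * t ^ ((3 : ℝ) / 2)
          + b * (lam * t ^ ((3 : ℝ) / 2) + (L : ℝ) * (t + Real.sqrt 2))
          + c * t ^ (2 : ℕ)
          - Polynomial.aeval t q) atTop (nhds 0))
    ↔ ∃ c : ℤ, c ≠ 0 ∧ q = Polynomial.C c * Polynomial.X ^ 2 :=
  stmt_4_general lam L hL q
end

section
/- Let P be a nonconstant real polynomial of degree d with leading coefficient a_d, and let γ ∈ ℝ be such that γ·a_d is irrational. If 0 < η < 2^{−(d+1)}, then the set {n ∈ ℕ : ‖γ·P(n)‖ < η} is not thick. -/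
open Filter

/-!
Put `Q = γ P`, of degree `d`. Its `(d - 1)`-st forward difference `g` satisfies
`g (x + k) = g x + k θ` with `θ = d! γ a_d` irrational, and `g n` is a `±`-binomial combination of
`Q n, …, Q (n + d - 1)`, so `‖g n‖ ≤ 2^(d-1) η` whenever all of these are within `η` of an integer.
A block of consecutive elements of length `d + k` therefore forces `‖k θ‖ ≤ 2^d η < 1/2`.
Since `θ` is irrational, the multiples `k θ` are dense modulo `1`, so some `‖k θ‖` is close
to `1/2`.
-/

open Polynomial fwdDiff Finset Nat

lemma distNearestInt_eq_norm (x : ℝ) : distNearestInt x = ‖(x : UnitAddCircle)‖ :=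
  UnitAddCircle.norm_eq.symm

lemma Thick.mono {S T : Set ℕ} (hS : Thick S) (hST : S ⊆ T) : Thick T :=
  fun L ↦ (hS L).imp fun _ hN j hj ↦ hST (hN j hj)

section fwdDiff

variable {M G : Type*} [AddCommMonoid M]

lemma fwdDiff_iter_comp_addMonoidHom [AddCommGroup G] {G' : Type*} [AddCommGroup G']
    (ψ : G →+ G') (h : M) (f : M → G) (n : ℕ) :
    Δ_[h] ^[n] (ψ ∘ f) = ψ ∘ Δ_[h] ^[n] f := by
  induction n with
  | zero => rfl
  | succ n ih =>
    rw [Function.iterate_succ_apply', Function.iterate_succ_apply', ih]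
    ext x
    simp [fwdDiff]

lemma add_nsmul_eq_of_fwdDiff_eq_const [AddCommGroup G] {h : M} {f : M → G} {c : G}
    (hf : Δ_[h] f = fun _ ↦ c) (x : M) (k : ℕ) : f (x + k • h) = f x + k • c := by
  induction k with
  | zero => simp
  | succ k ih =>
    have hstep := congrFun hf (x + k • h)
    simp only [fwdDiff] at hstep
    rw [succ_nsmul, ← add_assoc, succ_nsmul, ← add_assoc, ← ih, ← hstep]
    abel

lemma norm_fwdDiff_iter_le [SeminormedAddCommGroup G] {h x : M} {f : M → G} {n : ℕ} {η : ℝ}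
    (hf : ∀ j ≤ n, ‖f (x + j • h)‖ ≤ η) : ‖Δ_[h] ^[n] f x‖ ≤ 2 ^ n * η := by
  have hbinom : (2 : ℝ) ^ n = ∑ j ∈ range (n + 1), (n.choose j : ℝ) := by
    exact_mod_cast (Nat.sum_range_choose n).symm
  rw [fwdDiff_iter_eq_sum_shift, hbinom, sum_mul]
  refine (norm_sum_le _ _).trans (sum_le_sum fun j hj ↦ ?_)
  rw [← norm_natAbs_smul]
  refine norm_nsmul_le.trans ?_
  simp only [Int.natAbs_mul, Int.natAbs_pow, Int.natAbs_neg, Int.natAbs_one, one_pow, one_mul,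
    Int.natAbs_natCast]
  exact mul_le_mul_of_nonneg_left (hf j (Nat.lt_succ_iff.mp (mem_range.mp hj))) (by positivity)

end fwdDiff

lemma Polynomial.fwdDiff_iter_eval_add_natCast {R : Type*} [CommRing R] {P : R[X]} {e : ℕ}
    (hP : P.natDegree = e + 1) (x : R) (k : ℕ) :
    Δ_[1] ^[e] P.eval (x + k) = Δ_[1] ^[e] P.eval x + k * ((e + 1)! * P.leadingCoeff) := by
  have hconst : Δ_[1] (Δ_[1] ^[e] P.eval) = fun _ ↦ (e + 1)! * P.leadingCoeff := by
    rw [← Function.iterate_succ_apply' (fwdDiff 1), Nat.succ_eq_add_one, ← hP,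
      fwdDiff_iter_degree_eq_factorial]
    ext
    simp [mul_comm]
  simpa [nsmul_eq_mul] using add_nsmul_eq_of_fwdDiff_eq_const hconst x k

lemma Irrational.exists_lt_norm_coe_natCast_mul {θ c : ℝ} (hθ : Irrational θ) (hc : c < 1 / 2) :
    ∃ k : ℕ, c < ‖((k * θ : ℝ) : UnitAddCircle)‖ := by
  have hdense : DenseRange fun z : ℤ ↦ ((z • θ : ℝ) : UnitAddCircle) :=
    AddCircle.denseRange_zsmul_coe_iff.mpr (by simpa using hθ)
  obtain ⟨z, hz⟩ := hdense.exists_dist_lt ((1 / 2 : ℝ) : UnitAddCircle) (sub_pos.mpr hc)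
  have hhalf : ‖((1 / 2 : ℝ) : UnitAddCircle)‖ = 1 / 2 := by
    simpa using AddCircle.norm_half_period_eq (1 : ℝ)
  have hnatAbs : ‖((z.natAbs * θ : ℝ) : UnitAddCircle)‖ = ‖((z • θ : ℝ) : UnitAddCircle)‖ := by
    rw [← nsmul_eq_mul, AddCircle.coe_nsmul, AddCircle.coe_zsmul, norm_natAbs_smul]
  refine ⟨z.natAbs, ?_⟩
  rw [hnatAbs]
  have hrev := norm_sub_norm_le ((1 / 2 : ℝ) : UnitAddCircle) ((z • θ : ℝ) : UnitAddCircle)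
  rw [← dist_eq_norm, hhalf] at hrev
  linarith

lemma norm_coe_natCast_mul_le_of_thick {P : ℝ[X]} {e : ℕ} (hP : P.natDegree = e + 1) {η : ℝ}
    (hS : Thick {n : ℕ | ‖(↑(P.eval (n : ℝ)) : UnitAddCircle)‖ ≤ η}) (k : ℕ) :
    ‖((k * ((e + 1)! * P.leadingCoeff) : ℝ) : UnitAddCircle)‖ ≤ 2 ^ (e + 1) * η := by
  obtain ⟨N, hN⟩ := hS (e + k)
  set g := Δ_[1] ^[e] P.eval
  have hcoe : Δ_[1] ^[e] (fun x ↦ (↑(P.eval x) : UnitAddCircle)) = fun x ↦ (g x : UnitAddCircle) :=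
    fwdDiff_iter_comp_addMonoidHom (QuotientAddGroup.mk' _) 1 P.eval e
  have hblock : ∀ m ≤ k, ‖(g (N + m : ℕ) : UnitAddCircle)‖ ≤ 2 ^ e * η := by
    intro m hm
    rw [← congrFun hcoe]
    refine norm_fwdDiff_iter_le fun j hj ↦ ?_
    have harg : ((N + m : ℕ) : ℝ) + j • (1 : ℝ) = ((N + (m + j) : ℕ) : ℝ) := by
      push_cast
      ring
    rw [harg]
    exact hN (m + j) (by omega)
  have hdiff : g (N + k : ℕ) = g N + k * ((e + 1)! * P.leadingCoeff) := by
    rw [Nat.cast_add]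
    exact fwdDiff_iter_eval_add_natCast hP N k
  calc ‖((k * ((e + 1)! * P.leadingCoeff) : ℝ) : UnitAddCircle)‖
      = ‖(g (N + k : ℕ) : UnitAddCircle) - (g (N + 0 : ℕ) : UnitAddCircle)‖ := by
        rw [hdiff, add_zero, ← AddCircle.coe_sub, add_sub_cancel_left]
    _ ≤ 2 ^ e * η + 2 ^ e * η :=
        (norm_sub_le _ _).trans (add_le_add (hblock k le_rfl) (hblock 0 k.zero_le))
    _ = 2 ^ (e + 1) * η := by ring

theorem stmt_6_general (P : Polynomial ℝ) (hP : 0 < P.natDegree) (γ η : ℝ)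
    (hγ : Irrational (γ * P.leadingCoeff))
    (hη : η < (2 : ℝ) ^ (-((P.natDegree : ℤ) + 1))) :
    ¬ Thick {n : ℕ | distNearestInt (γ * P.eval (n : ℝ)) < η} := by
  intro hT
  obtain ⟨e, he⟩ : ∃ e, P.natDegree = e + 1 := ⟨P.natDegree - 1, by omega⟩
  have hγ0 : γ ≠ 0 := by
    rintro rfl
    simp at hγ
  have hQ : (C γ * P).natDegree = e + 1 := by rw [natDegree_C_mul hγ0, he]
  have hthick : Thick {n : ℕ | ‖(↑((C γ * P).eval (n : ℝ)) : UnitAddCircle)‖ ≤ η} :=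
    hT.mono fun n hn ↦ by simpa [← distNearestInt_eq_norm] using hn.le
  have hsmall : 2 ^ (e + 1) * η < 1 / 2 := by
    rw [he, show -(((e + 1 : ℕ) : ℤ) + 1) = -((e + 2 : ℕ) : ℤ) by push_cast; ring, zpow_neg,
      zpow_natCast] at hη
    calc 2 ^ (e + 1) * η < 2 ^ (e + 1) * (2 ^ (e + 2))⁻¹ := by gcongr
      _ = 1 / 2 := by rw [pow_succ 2 (e + 1)]; field_simp
  obtain ⟨k, hk⟩ :=
    (hγ.natCast_mul (factorial_ne_zero (e + 1))).exists_lt_norm_coe_natCast_mul hsmall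
  have hbound := norm_coe_natCast_mul_le_of_thick hQ hthick k
  rw [leadingCoeff_mul, leadingCoeff_C] at hbound
  exact hbound.not_gt hk

/-- Lemma 2.1: if γ·(leading coefficient of P) is irrational and
0 < η < 2^{-(d+1)}, then {n : ‖γ P(n)‖ < η} is not thick. -/
theorem stmt_6 (P : Polynomial ℝ) (hP : 0 < P.natDegree) (γ η : ℝ)
    (hγ : Irrational (γ * P.leadingCoeff))
    (hη0 : 0 < η) (hη : η < (2 : ℝ) ^ (-((P.natDegree : ℤ) + 1))) :
    ¬ Thick {n : ℕ | distNearestInt (γ * P.eval (n : ℝ)) < η} :=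
  stmt_6_general P hP γ η hγ hη
end

section
/- Let u₁,…,u_k : ℕ → ℤ. Suppose there exist real numbers θ₁,…,θ_k and a nonconstant real polynomial P such that sup_{n ∈ ℕ} |Σ_{i=1}^k θ_i u_i(n) − P(n)| < ∞. Then there exists a set E ⊆ ℕ of positive natural density such that R_{u₁}(E) ∩ ⋯ ∩ R_{u_k}(E) is not thick. -/
open Filter

/-!
Let `d ≥ 1` be the degree of `P` and `c` its leading coefficient. For a step `t ≥ 1` put
`γ = (2 d! |c| tᵈ)⁻¹`; taking `t` large makes `γ D` as small as we like. Let `E` be a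
positive-density subset of the Bohr set `{m : ‖m γ θᵢ‖ < ε for all i}` (‖·‖ the distance to `ℤ`),
which exists because Bohr sets are syndetic. For `n ∈ ⋂ᵢ R_{uᵢ}(E)` each `uᵢ(n)` is a difference of
two elements of `E`, so `γ P(n)` lies within `γ D + 2kε` of an integer. A thick set contains a
progression `N, N + t, …, N + d t`, and the `d`-th finite difference of `γ P` along it is
`γ d! c tᵈ = ±1/2`; but it is an integer combination, with absolute coefficient sum `2ᵈ`, of numbers
that are nearly integers, which is impossible once `2ᵈ (γ D + 2kε) < 1/2`.
-/

open Set Finset Filter Topology Polynomial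
open scoped Nat

section CompactGroup

variable {G : Type*} [SeminormedAddCommGroup G] [CompactSpace G]

theorem exists_lt_norm_nsmul_lt (g : G) {δ : ℝ} (hδ : 0 < δ) (M : ℕ) :
    ∃ q : ℕ, M < q ∧ ‖q • g‖ < δ := by
  obtain ⟨y, σ, hσ, hlim⟩ := CompactSpace.tendsto_subseq fun n : ℕ => n • g
  obtain ⟨N, hN⟩ := Metric.cauchySeq_iff'.mp hlim.cauchySeq δ hδ
  have hgap : σ N + M < σ (M + 1 + N) := by
    have := hσ.add_le_nat (M + 1) N
    omega
  refine ⟨σ (M + 1 + N) - σ N, by omega, ?_⟩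
  rw [sub_nsmul g (by omega), ← sub_eq_add_neg, ← dist_eq_norm]
  exact hN _ (by omega)

theorem syndetic_setOf_norm_nsmul_lt (g : G) {δ : ℝ} (hδ : 0 < δ) :
    Syndetic {n : ℕ | ‖n • g‖ < δ} := by
  have hcover : closure (range fun n : ℕ => n • g) ⊆ ⋃ p : ℕ, {y | ‖y + p • g‖ < δ} := by
    intro y hy
    obtain ⟨m, hm⟩ := Metric.mem_closure_range_iff.mp hy (δ / 2) (half_pos hδ)
    obtain ⟨q, hmq, hq⟩ := exists_lt_norm_nsmul_lt g (half_pos hδ) m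
    refine mem_iUnion.mpr ⟨q - m, ?_⟩
    calc ‖y + (q - m) • g‖ = ‖(y - m • g) + q • g‖ := by
          rw [sub_nsmul _ hmq.le]; abel_nf
      _ ≤ ‖y - m • g‖ + ‖q • g‖ := norm_add_le _ _
      _ < δ / 2 + δ / 2 := add_lt_add (by rwa [← dist_eq_norm]) hq
      _ = δ := add_halves δ
  obtain ⟨T, hT⟩ := isClosed_closure.isCompact.elim_finite_subcover _
    (fun p => isOpen_lt (by fun_prop) continuous_const) hcover
  refine ⟨T.sup id + 1, Nat.succ_pos _, fun a => ?_⟩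
  obtain ⟨p, hpT, hp⟩ := mem_iUnion₂.mp (hT (subset_closure (mem_range_self a)))
  refine ⟨a + p, by simpa [add_nsmul] using hp, Nat.le_add_right a p, ?_⟩
  exact Nat.add_lt_add_left (Nat.lt_succ_of_le (Finset.le_sup (f := id) hpT)) a

end CompactGroup

theorem posDensity_of_abs_sub_le {E : Set ℕ} {δ C : ℝ} (hδ : 0 < δ)
    (hE : ∀ N : ℕ, |(countIn E N : ℝ) - δ * N| ≤ C) : PosDensity E := by
  refine ⟨δ, hδ, tendsto_sub_nhds_zero_iff.mp ?_⟩
  refine squeeze_zero_norm' ?_ (tendsto_const_div_atTop_nhds_zero_nat C)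
  filter_upwards [eventually_gt_atTop 0] with N hN
  rw [Real.norm_eq_abs, div_sub' (by positivity), abs_div, Nat.abs_cast, mul_comm]
  gcongr
  exact hE N

theorem abs_countIn_range_sub_le {L : ℕ} {m : ℕ → ℕ}
    (hm : ∀ r, r * L + 1 ≤ m r ∧ m r ≤ (r + 1) * L) (N : ℕ) :
    |(countIn (range m) N : ℝ) - N / L| ≤ 1 := by
  classical
  have hL : 0 < L := by have := hm 0; omega
  have hmono : StrictMono m := strictMono_nat_of_lt_succ fun r => by
    have := hm r; have := hm (r + 1); nlinarith
  have hlow : N / L ≤ countIn (range m) N := by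
    refine (Finset.card_range _).symm.trans_le
      (Finset.card_le_card_of_injOn m (fun r hr => ?_) hmono.injective.injOn)
    have hr : (r + 1) * L ≤ N := (Nat.le_div_iff_mul_le hL).mp (Finset.mem_range.mp hr)
    have := hm r
    simp only [coe_filter, Finset.mem_Icc]
    exact ⟨⟨by omega, by omega⟩, r, rfl⟩
  have hup : countIn (range m) N ≤ N / L + 1 := by
    refine (Finset.card_le_card (t := (Finset.range (N / L + 1)).image m) fun x hx => ?_).trans
      (Finset.card_image_le.trans (Finset.card_range _).le)
    obtain ⟨hx, r, rfl⟩ := Finset.mem_filter.mp hx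
    have := hm r
    have : r ≤ N / L :=
      (Nat.le_div_iff_mul_le hL).mpr (by have := (Finset.mem_Icc.mp hx).2; omega)
    exact Finset.mem_image_of_mem m (Finset.mem_range.mpr (by omega))
  have hdiv : (N : ℝ) / L - 1 ≤ (N / L : ℕ) := by
    rw [← Nat.floor_div_eq_div (K := ℝ)]; exact (Nat.sub_one_lt_floor _).le
  have hdiv' : ((N / L : ℕ) : ℝ) ≤ N / L := Nat.cast_div_le
  have hlow' : ((N / L : ℕ) : ℝ) ≤ countIn (range m) N := by exact_mod_cast hlow
  have hup' : (countIn (range m) N : ℝ) ≤ (N / L : ℕ) + 1 := by exact_mod_cast hup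
  rw [abs_le]; constructor <;> linarith

theorem Syndetic.exists_subset_posDensity {S : Set ℕ} (hS : Syndetic S) :
    ∃ E ⊆ S, PosDensity E := by
  obtain ⟨L, hL, hS⟩ := hS
  choose m hmS hm using fun r => hS (r * L + 1)
  refine ⟨range m, range_subset_iff.mpr hmS,
    posDensity_of_abs_sub_le (δ := (L : ℝ)⁻¹) (C := 1) (by positivity) fun N => ?_⟩
  rw [inv_mul_eq_div]
  exact abs_countIn_range_sub_le (fun r => ⟨(hm r).1, by linarith [(hm r).2]⟩) N

theorem Polynomial.sum_range_zsmul_eval_add_mul {R : Type*} [CommRing R] [NoZeroDivisors R]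
    (P : R[X]) (x : R) {t : R} (ht : t ≠ 0) :
    ∑ j ∈ range (P.natDegree + 1),
        ((-1 : ℤ) ^ (P.natDegree - j) * P.natDegree.choose j) • P.eval (x + j * t) =
      P.natDegree ! * P.leadingCoeff * t ^ P.natDegree := by
  set Q := P.comp (C t * X + C x)
  have hlin : (C t * X + C x).natDegree = 1 := natDegree_linear ht
  have hQ : Q.natDegree = P.natDegree := by simp [Q, natDegree_comp, hlin]
  have hQc : Q.leadingCoeff = P.leadingCoeff * t ^ P.natDegree := by
    rw [leadingCoeff_comp (by rw [hlin]; exact one_ne_zero), leadingCoeff_linear ht]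
  have := congrFun Q.fwdDiff_iter_degree_eq_factorial 0
  rw [fwdDiff_iter_eq_sum_shift, hQ, hQc] at this
  simp only [Q, eval_comp, eval_add, eval_mul, eval_C, eval_X, zero_add, nsmul_eq_mul, mul_one,
    zsmul_eq_mul, Pi.smul_apply, smul_eq_mul, Pi.natCast_apply] at this ⊢
  push_cast at this ⊢
  simp only [add_comm x, mul_comm _ t, this]
  ring

theorem Polynomial.half_le_two_pow_mul_of_norm_coe_eval_le (Q : ℝ[X]) {x t η : ℝ} (ht : t ≠ 0)
    (hQ : |Q.natDegree ! * Q.leadingCoeff * t ^ Q.natDegree| = 1 / 2)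
    (hη : ∀ j ≤ Q.natDegree, ‖((Q.eval (x + j * t) : ℝ) : UnitAddCircle)‖ ≤ η) :
    1 / 2 ≤ 2 ^ Q.natDegree * η := by
  set d := Q.natDegree
  have hnorm : ∀ j ∈ range (d + 1), ‖((-1 : ℤ) ^ (d - j) * (d.choose j : ℤ)) •
      ((Q.eval (x + j * t) : ℝ) : UnitAddCircle)‖ ≤ (d.choose j : ℝ) * η := fun j hj => by
    refine (norm_zsmul_le _ _).trans ?_
    simp only [norm_mul, norm_pow, norm_neg, norm_one, one_pow, one_mul, Int.norm_natCast]
    exact mul_le_mul_of_nonneg_left (hη j (Nat.lt_succ_iff.mp (mem_range.mp hj))) (by positivity)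
  calc 1 / 2 = ‖((d ! * Q.leadingCoeff * t ^ d : ℝ) : UnitAddCircle)‖ := by
        rw [(AddCircle.norm_coe_eq_abs_iff (p := (1 : ℝ)) one_ne_zero).mpr (by norm_num [hQ]), hQ]
    _ = ‖∑ j ∈ range (d + 1), ((-1 : ℤ) ^ (d - j) * (d.choose j : ℤ)) •
          ((Q.eval (x + j * t) : ℝ) : UnitAddCircle)‖ := by
        rw [← Q.sum_range_zsmul_eval_add_mul x ht, ← QuotientAddGroup.mk'_apply, map_sum]
        simp only [map_zsmul, QuotientAddGroup.mk'_apply]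
        rfl
    _ ≤ ∑ j ∈ range (d + 1), (d.choose j * η : ℝ) := (norm_sum_le _ _).trans (sum_le_sum hnorm)
    _ = 2 ^ d * η := by
        rw [← sum_mul]
        exact_mod_cast congrArg (fun n : ℕ => (n : ℝ) * η) (Nat.sum_range_choose d)

theorem norm_zsmul_lt_of_mem_retSet {G : Type*} [SeminormedAddCommGroup G] {g : G} {E : Set ℕ}
    {ε : ℝ} (hE : ∀ m ∈ E, ‖m • g‖ < ε) {u : ℕ → ℤ} {n : ℕ} (hn : n ∈ retSet u E) :
    ‖u n • g‖ < 2 * ε := by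
  obtain ⟨m, m', hm, hm', h⟩ := hn
  calc ‖u n • g‖ = ‖m' • g - m • g‖ := by
        rw [show u n = m' - m by omega, sub_zsmul, natCast_zsmul, natCast_zsmul, sub_eq_add_neg]
    _ ≤ ‖m' • g‖ + ‖m • g‖ := norm_sub_le _ _
    _ < ε + ε := add_lt_add (hE _ hm') (hE _ hm)
    _ = 2 * ε := (two_mul ε).symm

theorem norm_coe_mul_eval_le_of_mem_iInter_retSet {k : ℕ} {u : Fin k → ℕ → ℤ} {θ : Fin k → ℝ}
    {P : ℝ[X]} {D γ ε : ℝ} (hγ : 0 ≤ γ)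
    (hD : ∀ n : ℕ, |(∑ i, θ i * (u i n : ℝ)) - P.eval (n : ℝ)| ≤ D) {E : Set ℕ}
    (hE : ∀ m ∈ E, ∀ i, ‖m • ((γ * θ i : ℝ) : UnitAddCircle)‖ < ε) {n : ℕ}
    (hn : n ∈ ⋂ i, retSet (u i) E) :
    ‖((γ * P.eval (n : ℝ) : ℝ) : UnitAddCircle)‖ ≤ γ * D + 2 * k * ε := by
  have hS : ((γ * ∑ i, θ i * (u i n : ℝ) : ℝ) : UnitAddCircle) =
      ∑ i, u i n • ((γ * θ i : ℝ) : UnitAddCircle) := by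
    rw [Finset.mul_sum, ← QuotientAddGroup.mk'_apply, map_sum]
    refine Finset.sum_congr rfl fun i _ => ?_
    rw [← AddCircle.coe_zsmul, zsmul_eq_mul, QuotientAddGroup.mk'_apply]
    ring_nf
  calc ‖((γ * P.eval (n : ℝ) : ℝ) : UnitAddCircle)‖
      ≤ ‖((γ * ∑ i, θ i * (u i n : ℝ) : ℝ) : UnitAddCircle)‖ +
          ‖((γ * P.eval (n : ℝ) - γ * ∑ i, θ i * (u i n : ℝ) : ℝ) : UnitAddCircle)‖ := by
        rw [AddCircle.coe_sub]
        exact norm_le_norm_add_norm_sub' _ _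
    _ ≤ 2 * k * ε + γ * D := by
        gcongr
        · rw [hS]
          refine (norm_sum_le _ _).trans ?_
          refine (Finset.sum_le_sum fun i _ =>
            (norm_zsmul_lt_of_mem_retSet (hE · · i) (mem_iInter.mp hn i)).le).trans_eq ?_
          simp only [Finset.sum_const, Finset.card_univ, Fintype.card_fin, nsmul_eq_mul]
          ring
        · refine QuotientAddGroup.norm_mk_le_norm.trans ?_
          rw [Real.norm_eq_abs, ← mul_sub, abs_mul, abs_of_nonneg hγ, abs_sub_comm]
          exact mul_le_mul_of_nonneg_left (hD n) hγ
    _ = γ * D + 2 * k * ε := add_comm _ _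

theorem exists_pos_inv_mul_pow_mul_lt {a : ℝ} (ha : 0 < a) {d : ℕ} (hd : d ≠ 0) (D : ℝ) {η : ℝ}
    (hη : 0 < η) : ∃ t : ℕ, 0 < t ∧ (a * t ^ d)⁻¹ * D < η := by
  have : Tendsto (fun t : ℕ => (a * (t : ℝ) ^ d)⁻¹ * D) atTop (𝓝 0) := by
    simpa using (((tendsto_pow_atTop hd).comp tendsto_natCast_atTop_atTop).const_mul_atTop
      ha).inv_tendsto_atTop.mul_const D
  exact ((eventually_gt_atTop 0).and (this.eventually (gt_mem_nhds hη))).exists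

theorem not_thick_iInter_retSet {k : ℕ} {u : Fin k → ℕ → ℤ} {θ : Fin k → ℝ} {P : ℝ[X]} {D : ℝ}
    (hD : ∀ n : ℕ, |(∑ i, θ i * (u i n : ℝ)) - P.eval (n : ℝ)| ≤ D) {γ ε : ℝ} {t : ℕ}
    (ht : 0 < t) (hγ : 0 < γ)
    (hscale : |(P.natDegree ! : ℝ) * (γ * P.leadingCoeff) * t ^ P.natDegree| = 1 / 2)
    (hsmall : 2 ^ P.natDegree * (γ * D + 2 * k * ε) < 1 / 2) {E : Set ℕ}
    (hE : ∀ m ∈ E, ∀ i, ‖m • ((γ * θ i : ℝ) : UnitAddCircle)‖ < ε) :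
    ¬ Thick (⋂ i, retSet (u i) E) := by
  intro hT
  obtain ⟨N, hN⟩ := hT (P.natDegree * t)
  have hdeg : (C γ * P).natDegree = P.natDegree := natDegree_C_mul hγ.ne'
  have hnear : ∀ j ≤ (C γ * P).natDegree,
      ‖(((C γ * P).eval (N + j * t) : ℝ) : UnitAddCircle)‖ ≤ γ * D + 2 * k * ε := fun j hj => by
    rw [hdeg] at hj
    simpa [mul_comm (j : ℝ)] using
      norm_coe_mul_eval_le_of_mem_iInter_retSet hγ.le hD hE (hN (j * t) (by gcongr))
  have key := (C γ * P).half_le_two_pow_mul_of_norm_coe_eval_le (by positivity)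
    (by rwa [hdeg, leadingCoeff_mul, leadingCoeff_C]) hnear
  rw [hdeg] at key
  exact (key.trans_lt hsmall).false

/-- Proposition 2.3 (Bohr obstruction principle). -/
theorem stmt_8 (k : ℕ) (u : Fin k → ℕ → ℤ) (θ : Fin k → ℝ) (P : Polynomial ℝ)
    (hP : 0 < P.natDegree)
    (D : ℝ) (hD : ∀ n : ℕ, |(∑ i, θ i * (u i n : ℝ)) - P.eval (n : ℝ)| ≤ D) :
    ∃ E : Set ℕ, PosDensity E ∧ ¬ Thick (⋂ i, retSet (u i) E) := by
  set d := P.natDegree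
  have hc : 0 < |P.leadingCoeff| :=
    abs_pos.mpr (leadingCoeff_ne_zero.mpr (ne_zero_of_natDegree_gt hP))
  set η : ℝ := (2 ^ (d + 2))⁻¹
  obtain ⟨t, ht, htD⟩ := exists_pos_inv_mul_pow_mul_lt (a := 2 * d ! * |P.leadingCoeff|)
    (by positivity) hP.ne' D (η := η) (by positivity)
  set γ : ℝ := (2 * d ! * |P.leadingCoeff| * t ^ d)⁻¹
  have hγ : 0 < γ := by positivity
  set ε : ℝ := η / (2 * k + 1)
  obtain ⟨E, hEB, hE⟩ := (syndetic_setOf_norm_nsmul_lt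
    (fun i => ((γ * θ i : ℝ) : UnitAddCircle)) (by positivity : 0 < ε)).exists_subset_posDensity
  refine ⟨E, hE, not_thick_iInter_retSet hD ht hγ ?_ ?_
    fun m hm i => (norm_le_pi_norm _ i).trans_lt (hEB hm)⟩
  · show |(d ! : ℝ) * (γ * P.leadingCoeff) * t ^ d| = 1 / 2
    rw [abs_mul, abs_mul, abs_mul, abs_of_pos hγ, Nat.abs_cast,
      abs_of_nonneg (by positivity : (0 : ℝ) ≤ t ^ d)]
    simp only [γ]
    field_simp
  · have hε : 2 * k * ε ≤ η := by
      rw [mul_div_assoc', div_le_iff₀ (by positivity)]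
      nlinarith [show 0 < η by positivity]
    have hη : (2 : ℝ) ^ d * (2 * η) = 1 / 2 := by simp only [η, pow_add]; field_simp
    nlinarith [show (0 : ℝ) < 2 ^ d by positivity]
end

section
/- Let c₁,…,c_m ∈ ℝ and ε > 0. Then there exist arbitrarily large N ∈ ℕ such that for every 1 ≤ j ≤ m, both ‖c_j · N^{3/2}‖ < ε and ‖(3/2) · c_j · N^{1/2}‖ < ε. -/
open Filter

lemma distNearestInt_add_le (x y : ℝ) :
    distNearestInt (x + y) ≤ distNearestInt x + distNearestInt y := by
  calc distNearestInt (x + y) ≤ |x + y - ((round x + round y : ℤ) : ℝ)| :=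
        distNearestInt_le _ _
    _ = |(x - round x) + (y - round y)| := by push_cast; ring_nf
    _ ≤ distNearestInt x + distNearestInt y := abs_add_le _ _

lemma distNearestInt_sub_le (x y : ℝ) :
    distNearestInt (x - y) ≤ distNearestInt x + distNearestInt y := by
  calc distNearestInt (x - y) ≤ |x - y - ((round x - round y : ℤ) : ℝ)| :=
        distNearestInt_le _ _
    _ = |(x - round x) - (y - round y)| := by push_cast; ring_nf
    _ ≤ distNearestInt x + distNearestInt y := abs_sub _ _

lemma distNearestInt_natCast_mul_le (k : ℕ) (x : ℝ) :
    distNearestInt (k * x) ≤ k * distNearestInt x := by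
  calc distNearestInt (k * x) ≤ |k * x - ((k * round x : ℤ) : ℝ)| := distNearestInt_le _ _
    _ = |(k : ℝ)| * |x - round x| := by rw [← abs_mul]; push_cast; ring_nf
    _ = k * distNearestInt x := by rw [Nat.abs_cast, distNearestInt]

/-- Total boundedness of `ℝ / ℤ`. -/
lemma exists_finite_coloring_distNearestInt_sub_lt {δ : ℝ} (hδ : 0 < δ) :
    ∃ (κ : Type) (_ : Finite κ) (col : ℝ → κ),
      ∀ x y, col x = col y → distNearestInt (x - y) < δ := by
  obtain ⟨K, hK⟩ := exists_nat_gt (1 / δ)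
  have hK₀ : (0 : ℝ) < K := lt_trans (by positivity) hK
  have cell_mem (x : ℝ) : ⌊Int.fract x * K⌋ ∈ Set.Ico (0 : ℤ) K := by
    constructor
    · exact Int.floor_nonneg.mpr (by have := Int.fract_nonneg x; positivity)
    · rw [Int.floor_lt]
      push_cast
      nlinarith [Int.fract_lt_one x]
  refine ⟨Set.Ico (0 : ℤ) K, inferInstance, fun x => ⟨_, cell_mem x⟩, fun x y hxy => ?_⟩
  have hcell : |Int.fract x * K - Int.fract y * K| < 1 :=
    Int.abs_sub_lt_one_of_floor_eq_floor (congrArg Subtype.val hxy)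
  have hfract : |Int.fract x - Int.fract y| < δ := by
    rw [← sub_mul, abs_mul, abs_of_pos hK₀] at hcell
    rw [div_lt_iff₀ hδ] at hK
    nlinarith [abs_nonneg (Int.fract x - Int.fract y)]
  calc distNearestInt (x - y) ≤ |x - y - ((⌊x⌋ - ⌊y⌋ : ℤ) : ℝ)| := distNearestInt_le _ _
    _ = |Int.fract x - Int.fract y| := by rw [Int.fract, Int.fract]; push_cast; ring_nf
    _ < δ := hfract

lemma exists_progression_distNearestInt_sub_lt {ι : Type*} [Finite ι] (f : ι → ℝ → ℝ)
    {S : Finset ℕ} (hS : 0 ∈ S) {δ : ℝ} (hδ : 0 < δ) (n₀ : ℕ) :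
    ∃ n ≥ n₀, ∃ b : ℕ, ∀ i, ∀ s ∈ S, distNearestInt (f i (b + s * n) - f i b) < δ := by
  obtain ⟨κ, _, col, hcol⟩ := exists_finite_coloring_distNearestInt_sub_lt hδ
  -- colouring `t` through `q * t` makes the common difference a multiple of `q > n₀`
  set q := n₀ + 1
  obtain ⟨a, ha, b, _, hmono⟩ := Combinatorics.exists_mono_homothetic_copy S
    (fun t : ℕ => fun i => col (f i ((q * t : ℕ) : ℝ)))
  refine ⟨q * a, (Nat.lt_succ_self n₀).le.trans (Nat.le_mul_of_pos_right q ha), q * b,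
    fun i s hs => hcol _ _ ?_⟩
  have hcolour := congrFun ((hmono s hs).trans (hmono 0 hS).symm) i
  simp only [smul_eq_mul, mul_zero, zero_add] at hcolour
  convert hcolour using 3
  push_cast
  ring

/-- The third difference of `t³ / 6` with step `h` is `h³`. -/
lemma distNearestInt_mul_pow_three_lt {γ x h δ : ℝ}
    (hclose : ∀ s ∈ Finset.range 4,
      distNearestInt (γ * (x + s * h) ^ 3 / 6 - γ * x ^ 3 / 6) < δ) :
    distNearestInt (γ * h ^ 3) < 7 * δ := by
  set D : ℕ → ℝ := fun s => γ * (x + s * h) ^ 3 / 6 - γ * x ^ 3 / 6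
  have hD (s : ℕ) (hs : s < 4) : distNearestInt (D s) < δ := hclose s (Finset.mem_range.mpr hs)
  have hdiff : γ * h ^ 3 = D 3 - 3 * D 2 + 3 * D 1 := by
    simp only [D]; push_cast; ring
  have h₂ : distNearestInt (3 * D 2) ≤ 3 * distNearestInt (D 2) := by
    exact_mod_cast distNearestInt_natCast_mul_le 3 (D 2)
  have h₁ : distNearestInt (3 * D 1) ≤ 3 * distNearestInt (D 1) := by
    exact_mod_cast distNearestInt_natCast_mul_le 3 (D 1)
  calc distNearestInt (γ * h ^ 3)
      ≤ distNearestInt (D 3) + distNearestInt (3 * D 2) + distNearestInt (3 * D 1) := by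
        rw [hdiff]
        linarith [distNearestInt_add_le (D 3 - 3 * D 2) (3 * D 1),
          distNearestInt_sub_le (D 3) (3 * D 2)]
    _ < 7 * δ := by
        linarith [hD 1 (by norm_num), hD 2 (by norm_num), hD 3 (by norm_num)]

lemma sq_rpow_natCast_div_two {x : ℝ} (hx : 0 ≤ x) (k : ℕ) :
    (x ^ 2) ^ ((k : ℝ) / 2) = x ^ k := by
  rw [← Real.rpow_natCast x 2, ← Real.rpow_mul hx, ← Real.rpow_natCast x k]
  congr 1
  push_cast
  ring

/-- There exist arbitrarily large N making both ‖c_j N^{3/2}‖ and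
‖(3/2) c_j N^{1/2}‖ small simultaneously for all j. -/
theorem stmt_12 (m : ℕ) (c : Fin m → ℝ) (ε : ℝ) (hε : 0 < ε) :
    ∀ N₀ : ℕ, ∃ N : ℕ, N₀ ≤ N ∧ ∀ j : Fin m,
      distNearestInt (c j * (N : ℝ) ^ ((3 : ℝ) / 2)) < ε ∧
      distNearestInt ((3 / 2) * c j * (N : ℝ) ^ ((1 : ℝ) / 2)) < ε := by
  intro N₀
  obtain ⟨n, hn, b, hclose⟩ := exists_progression_distNearestInt_sub_lt
    (Sum.elim (fun j x => c j * x ^ 3 / 6) (fun j x => 3 / 2 * c j * x))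
    (Finset.mem_range.mpr (by norm_num : 0 < 4)) (by positivity : 0 < ε / 7) N₀
  refine ⟨n ^ 2, hn.trans (Nat.le_self_pow two_ne_zero n), fun j => ⟨?_, ?_⟩⟩
  · have h := sq_rpow_natCast_div_two (Nat.cast_nonneg (α := ℝ) n) 3
    push_cast at h ⊢
    rw [h]
    linarith [distNearestInt_mul_pow_three_lt (hclose (Sum.inl j))]
  · have h := sq_rpow_natCast_div_two (Nat.cast_nonneg (α := ℝ) n) 1
    push_cast at h ⊢
    rw [h, pow_one]
    have hstep := hclose (Sum.inr j) 1 (by simp)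
    simp only [Sum.elim_inr, Nat.cast_one, one_mul, mul_add, add_sub_cancel_left] at hstep
    linarith
end

section
/- Let λ ∈ ℝ be irrational and let β > 0 be such that 1, β, λβ are linearly independent over ℚ. Let δ > 0 and define E = {m ∈ ℕ : ‖β·m‖ < δ and ‖λ·β·m‖ < δ}. Then for every integer r with ‖β·r‖ < 2δ and ‖λ·β·r‖ < 2δ, there exists m ∈ ℕ with m + r ∈ ℕ such that m ∈ E and m + r ∈ E. -/
open Filter

/-!
Let `x` and `y` be the signed distances from `β r` and `λ β r` to the nearest integers. If
`m ≥ |r|` puts `β m` within `δ - |x| / 2` of `-x / 2` and `λ β m` within `δ - |y| / 2` of `-y / 2`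
modulo `1`, then `m` and `m + r` both lie in `E`. Such an `m` exists by Kronecker's theorem for
`v = (β, λ β)`: the group `ℤ v + ℤ²` is dense in `ℝ²`. By compactness it has nonzero elements of
arbitrarily small norm, so its closure contains a whole line `ℝ u`. Its image under
`w ↦ u.2 w.1 - u.1 w.2`, whose kernel is `ℝ u`, is a subgroup of `ℝ`. That subgroup cannot be
cyclic without an integer relation between `1, β, λ β`, so it is dense, and hence so is
`ℤ v + ℤ²`. Finally, adding many copies of a near-period makes `m` as large as required.
-/

open Topology

def intLattice : AddSubgroup (ℝ × ℝ) :=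
  (AddSubgroup.zmultiples (1 : ℝ)).prod (AddSubgroup.zmultiples 1)

lemma mem_intLattice {w : ℝ × ℝ} : w ∈ intLattice ↔ ∃ a b : ℤ, ((a : ℝ), (b : ℝ)) = w := by
  simp [intLattice, AddSubgroup.mem_prod, AddSubgroup.mem_zmultiples_iff, Prod.ext_iff, eq_comm]

lemma exists_pos_nat_smul_sub_mem_intLattice_lt (v : ℝ × ℝ) {η : ℝ} (hη : 0 < η) :
    ∃ q : ℕ, 0 < q ∧ ∃ w ∈ intLattice, ‖(q : ℝ) • v - w‖ < η := by
  let fl (n : ℕ) : ℝ × ℝ := ((⌊n * v.1⌋ : ℤ), (⌊n * v.2⌋ : ℤ))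
  have hfl (n : ℕ) : fl n ∈ intLattice := mem_intLattice.2 ⟨_, _, rfl⟩
  have hfract (t : ℝ) : |Int.fract t| ≤ 1 := by
    rw [abs_of_nonneg (Int.fract_nonneg t)]
    exact (Int.fract_lt_one t).le
  have hbdd (n : ℕ) : (n : ℝ) • v - fl n ∈ Metric.closedBall (0 : ℝ × ℝ) 1 := by
    simp only [mem_closedBall_zero_iff, Prod.norm_def, Prod.fst_sub, Prod.snd_sub,
      Prod.smul_fst, Prod.smul_snd, smul_eq_mul, Real.norm_eq_abs, fl, Int.self_sub_floor]
    exact max_le (hfract _) (hfract _)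
  obtain ⟨_, _, φ, hφ, hlim⟩ := tendsto_subseq_of_bounded Metric.isBounded_closedBall hbdd
  obtain ⟨N, hN⟩ := Metric.cauchySeq_iff'.1 hlim.cauchySeq η hη
  refine ⟨φ (N + 1) - φ N, Nat.sub_pos_of_lt (hφ N.lt_succ_self),
    fl (φ (N + 1)) - fl (φ N), sub_mem (hfl _) (hfl _), ?_⟩
  convert hN (N + 1) N.le_succ using 1
  rw [dist_eq_norm, Function.comp_apply, Function.comp_apply,
    Nat.cast_sub (hφ N.lt_succ_self).le, sub_smul]
  abel_nf

lemma AddSubgroup.exists_smul_mem_topologicalClosure {E : Type*} [NormedAddCommGroup E]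
    [NormedSpace ℝ E] [ProperSpace E] (G : AddSubgroup E)
    (hG : ∀ η > 0, ∃ g ∈ G, g ≠ 0 ∧ ‖g‖ < η) :
    ∃ u : E, u ≠ 0 ∧ ∀ t : ℝ, t • u ∈ G.topologicalClosure := by
  choose g hgG hg0 hgη using fun k : ℕ => hG (1 / (k + 1)) Nat.one_div_pos_of_nat
  have hsphere (k : ℕ) : ‖g k‖⁻¹ • g k ∈ Metric.sphere (0 : E) 1 := by
    rw [mem_sphere_zero_iff_norm, norm_smul, norm_inv, norm_norm,
      inv_mul_cancel₀ (norm_ne_zero_iff.2 (hg0 k))]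
  obtain ⟨u, hu, φ, hφ, hlim⟩ := tendsto_subseq_of_bounded Metric.isBounded_sphere hsphere
  rw [Metric.isClosed_sphere.closure_eq, mem_sphere_zero_iff_norm] at hu
  refine ⟨u, norm_ne_zero_iff.1 (by rw [hu]; exact one_ne_zero), fun t => ?_⟩
  -- `t • u` is the limit of the multiples `round (t / ‖g‖) • g` along the subsequence.
  let c (k : ℕ) : ℝ := round (t / ‖g (φ k)‖) * ‖g (φ k)‖
  have hc : Tendsto c atTop (𝓝 t) := by
    refine tendsto_iff_dist_tendsto_zero.2 (squeeze_zero (fun _ => dist_nonneg) (fun k => ?_)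
      tendsto_one_div_add_atTop_nhds_zero_nat)
    have hpos : 0 < ‖g (φ k)‖ := norm_pos_iff.2 (hg0 _)
    calc dist (c k) t = |round (t / ‖g (φ k)‖) - t / ‖g (φ k)‖| * ‖g (φ k)‖ := by
          rw [Real.dist_eq, ← abs_of_pos hpos, ← abs_mul, abs_of_pos hpos, sub_mul,
            div_mul_cancel₀ _ hpos.ne']
      _ ≤ 1 / 2 * ‖g (φ k)‖ := by
          gcongr
          rw [abs_sub_comm]
          exact abs_sub_round _
      _ ≤ 1 / (k + 1) := by
          have : ‖g (φ k)‖ < 1 / (k + 1) := (hgη _).trans_le (by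
            gcongr
            exact hφ.id_le k)
          linarith
  refine mem_closure_of_tendsto (hc.smul hlim) (Eventually.of_forall fun k => ?_)
  simp only [Function.comp_apply, c, smul_smul, mul_assoc,
    mul_inv_cancel₀ (norm_ne_zero_iff.2 (hg0 _)), mul_one, Int.cast_smul_eq_zsmul]
  exact zsmul_mem (hgG _) _

lemma AddSubgroup.dense_of_dense_image {E : Type*} [NormedAddCommGroup E] [NormedSpace ℝ E]
    [CompleteSpace E] (G : AddSubgroup E) (f : E →L[ℝ] ℝ) (hf : Function.Surjective f)
    (hker : ∀ x, f x = 0 → x ∈ G.topologicalClosure) (hd : Dense (f '' G)) :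
    Dense (G : Set E) := by
  suffices Dense (G.topologicalClosure : Set E) by
    rwa [G.topologicalClosure_coe, dense_closure] at this
  refine (hd.preimage (f.isOpenMap hf)).mono ?_
  rintro x ⟨g, hg, hfx⟩
  have hxg : x - g ∈ G.topologicalClosure := hker _ (by rw [map_sub, hfx, sub_self])
  exact add_sub_cancel g x ▸ add_mem (G.le_topologicalClosure hg) hxg

def wedgeWith (u : ℝ × ℝ) : (ℝ × ℝ) →L[ℝ] ℝ :=
  u.2 • ContinuousLinearMap.fst ℝ ℝ ℝ - u.1 • ContinuousLinearMap.snd ℝ ℝ ℝ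

@[simp]
lemma wedgeWith_apply (u w : ℝ × ℝ) : wedgeWith u w = u.2 * w.1 - u.1 * w.2 := rfl

lemma wedgeWith_surjective {u : ℝ × ℝ} (hu : u ≠ 0) : Function.Surjective (wedgeWith u) := by
  have hn : 0 < u.1 ^ 2 + u.2 ^ 2 := by
    by_cases h₁ : u.1 = 0
    · have h₂ : u.2 ≠ 0 := fun h₂ => hu (Prod.ext h₁ h₂)
      positivity
    · positivity
  intro s
  refine ⟨(s / (u.1 ^ 2 + u.2 ^ 2)) • (u.2, -u.1), ?_⟩
  simp only [wedgeWith_apply, Prod.smul_fst, Prod.smul_snd, smul_eq_mul]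
  field_simp
  ring

lemma exists_smul_eq_of_wedgeWith_eq_zero {u w : ℝ × ℝ} (hu : u ≠ 0) (hw : wedgeWith u w = 0) :
    ∃ t : ℝ, t • u = w := by
  rw [wedgeWith_apply, sub_eq_zero] at hw
  by_cases h₁ : u.1 = 0
  · have h₂ : u.2 ≠ 0 := fun h₂ => hu (Prod.ext h₁ h₂)
    refine ⟨w.2 / u.2, Prod.ext ?_ ?_⟩
    · simp only [Prod.smul_fst, smul_eq_mul, h₁, mul_zero, zero_mul] at hw ⊢
      exact ((mul_eq_zero.1 hw).resolve_left h₂).symm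
    · simp [div_mul_cancel₀ _ h₂]
  · refine ⟨w.1 / u.1, Prod.ext ?_ ?_⟩
    · simp [div_mul_cancel₀ _ h₁]
    · simp only [Prod.smul_snd, smul_eq_mul]
      field_simp
      linarith

/-- `1, v.1, v.2` are linearly independent over `ℤ` (once `p = q = 0`, also `a = 0`). -/
def IndepWithOne (v : ℝ × ℝ) : Prop :=
  ∀ a p q : ℤ, a + p * v.1 + q * v.2 = 0 → p = 0 ∧ q = 0

section Kronecker

variable {v : ℝ × ℝ}

lemma IndepWithOne.eq_zero_of_wedgeWith_mem_zmultiples (hv : IndepWithOne v) {u : ℝ × ℝ}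
    {c : ℝ}
    (h : ∀ w ∈ AddSubgroup.zmultiples v ⊔ intLattice, wedgeWith u w ∈ AddSubgroup.zmultiples c) :
    u = 0 := by
  have hmem (w) (hw : w ∈ AddSubgroup.zmultiples v ⊔ intLattice) :
      ∃ k : ℤ, k * c = wedgeWith u w := by
    simpa [AddSubgroup.mem_zmultiples_iff] using h w hw
  obtain ⟨p, hp⟩ := hmem (1, 0) (AddSubgroup.mem_sup_right (mem_intLattice.2 ⟨1, 0, by simp⟩))
  obtain ⟨q, hq⟩ := hmem (0, 1) (AddSubgroup.mem_sup_right (mem_intLattice.2 ⟨0, 1, by simp⟩))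
  obtain ⟨k, hk⟩ := hmem v (AddSubgroup.mem_sup_left (AddSubgroup.mem_zmultiples v))
  simp only [wedgeWith_apply, mul_one, mul_zero, sub_zero, zero_sub] at hp hq hk
  by_cases hc : c = 0
  · simp only [hc, mul_zero] at hp hq
    exact Prod.ext (neg_eq_zero.1 hq.symm) hp.symm
  have hrel : (-k : ℤ) + p * v.1 + q * v.2 = 0 := by
    apply mul_left_cancel₀ hc
    push_cast
    linear_combination v.1 * hp + v.2 * hq - hk
  obtain ⟨rfl, rfl⟩ := hv _ _ _ hrel
  simp only [Int.cast_zero, zero_mul] at hp hq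
  exact Prod.ext (neg_eq_zero.1 hq.symm) hp.symm

lemma IndepWithOne.exists_mem_zmultiples_sup_intLattice_ne_zero_norm_lt (hv : IndepWithOne v)
    {η : ℝ} (hη : 0 < η) :
    ∃ g ∈ AddSubgroup.zmultiples v ⊔ intLattice, g ≠ 0 ∧ ‖g‖ < η := by
  obtain ⟨q, hq, w, hw, hlt⟩ := exists_pos_nat_smul_sub_mem_intLattice_lt v hη
  refine ⟨(q : ℝ) • v - w, sub_mem (AddSubgroup.mem_sup_left ?_) (AddSubgroup.mem_sup_right hw),
    fun h => ?_, hlt⟩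
  · rw [Nat.cast_smul_eq_nsmul]
    exact nsmul_mem (AddSubgroup.mem_zmultiples v) q
  obtain ⟨a, b, rfl⟩ := mem_intLattice.1 hw
  have h₁ : (-a : ℤ) + (q : ℤ) * v.1 + (0 : ℤ) * v.2 = 0 := by
    have := congrArg Prod.fst h
    simp only [Prod.fst_sub, Prod.smul_fst, smul_eq_mul, Prod.fst_zero] at this
    push_cast
    linarith
  exact hq.ne' (by exact_mod_cast (hv _ _ _ h₁).1)

theorem IndepWithOne.dense_zmultiples_sup_intLattice (hv : IndepWithOne v) :
    Dense ((AddSubgroup.zmultiples v ⊔ intLattice : AddSubgroup (ℝ × ℝ)) : Set (ℝ × ℝ)) := by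
  set G := AddSubgroup.zmultiples v ⊔ intLattice
  obtain ⟨u, hu, hline⟩ := G.exists_smul_mem_topologicalClosure
    fun η hη => hv.exists_mem_zmultiples_sup_intLattice_ne_zero_norm_lt hη
  refine G.dense_of_dense_image (wedgeWith u) (wedgeWith_surjective hu) (fun w hw => ?_) ?_
  · obtain ⟨t, rfl⟩ := exists_smul_eq_of_wedgeWith_eq_zero hu hw
    exact hline t
  rcases (G.map (wedgeWith u).toLinearMap.toAddMonoidHom).dense_or_cyclic with hd | ⟨c, hc⟩
  · simpa using hd
  rw [← AddSubgroup.zmultiples_eq_closure] at hc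
  exact absurd (hv.eq_zero_of_wedgeWith_mem_zmultiples fun w hw =>
    hc ▸ AddSubgroup.mem_map_of_mem _ hw) hu

theorem IndepWithOne.exists_int_ge_norm_smul_add_sub_lt (hv : IndepWithOne v) (p : ℝ × ℝ)
    {ε : ℝ} (hε : 0 < ε) (M : ℤ) :
    ∃ m : ℤ, M ≤ m ∧ ∃ w ∈ intLattice, ‖(m : ℝ) • v + w - p‖ < ε := by
  obtain ⟨_, hg, hgp⟩ := hv.dense_zmultiples_sup_intLattice.exists_dist_lt p (half_pos hε)
  obtain ⟨_, ⟨n, rfl⟩, w₀, hw₀, rfl⟩ := AddSubgroup.mem_sup.1 hg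
  -- push the time `n` beyond `M` with `k` copies of a near-period `q`, which together move the
  -- point by less than `ε / 2`
  set k : ℕ := (M - n).toNat + 1
  have hk : (0 : ℝ) < k := by positivity
  obtain ⟨q, hq, w₁, hw₁, hlt⟩ :=
    exists_pos_nat_smul_sub_mem_intLattice_lt v (div_pos (half_pos hε) hk)
  refine ⟨n + k * q, ?_, w₀ - (k : ℝ) • w₁, sub_mem hw₀ ?_, ?_⟩
  · have hq : (1 : ℤ) ≤ q := by exact_mod_cast hq
    have hkM : M - n ≤ (k : ℤ) := by
      push_cast [k]
      linarith [Int.self_le_toNat (M - n)]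
    nlinarith
  · rw [Nat.cast_smul_eq_nsmul]
    exact nsmul_mem hw₁ k
  calc ‖((n + k * q : ℤ) : ℝ) • v + (w₀ - (k : ℝ) • w₁) - p‖
      = ‖(n • v + w₀ - p) + (k : ℝ) • ((q : ℝ) • v - w₁)‖ := by
        congr 1
        push_cast
        rw [add_smul, mul_smul, Int.cast_smul_eq_zsmul]
        module
    _ ≤ ‖n • v + w₀ - p‖ + k * ‖(q : ℝ) • v - w₁‖ := by
        grw [norm_add_le, norm_smul, Real.norm_natCast]
    _ < ε / 2 + k * (ε / 2 / k) := by
        gcongr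
        rwa [← dist_eq_norm, dist_comm]
    _ = ε := by field_simp; ring

end Kronecker

lemma distNearestInt_add_intCast (z : ℝ) (k : ℤ) : distNearestInt (z + k) = distNearestInt z := by
  simp only [distNearestInt, round_add_intCast, Int.cast_add, add_sub_add_right_eq_sub]

-- `z` and `z + x` lie on either side of `z + x / 2`, each at distance `|x| / 2` from it.
lemma distNearestInt_lt_of_abs_add_half_lt {z x δ : ℝ} (a : ℤ)
    (h : |z + a + x / 2| + |x| / 2 < δ) : distNearestInt z < δ ∧ distNearestInt (z + x) < δ := by
  have hx : |x / 2| = |x| / 2 := by rw [abs_div, abs_two]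
  constructor
  · calc distNearestInt z ≤ |z - (-a : ℤ)| := round_le z (-a)
      _ = |(z + a + x / 2) + -(x / 2)| := by push_cast; ring_nf
      _ ≤ |z + a + x / 2| + |x| / 2 := by rw [← hx, ← abs_neg (x / 2)]; exact abs_add_le _ _
      _ < δ := h
  · calc distNearestInt (z + x) ≤ |z + x - (-a : ℤ)| := round_le _ (-a)
      _ = |(z + a + x / 2) + x / 2| := by push_cast; ring_nf
      _ ≤ |z + a + x / 2| + |x| / 2 := by rw [← hx]; exact abs_add_le _ _
      _ < δ := h

lemma distNearestInt_mul_lt_and_mul_add_lt (θ : ℝ) (m r a : ℤ) {δ : ℝ}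
    (h : |m * θ + a + (θ * r - round (θ * r)) / 2| + |θ * r - round (θ * r)| / 2 < δ) :
    distNearestInt (θ * m) < δ ∧ distNearestInt (θ * ((m + r : ℤ) : ℝ)) < δ := by
  have hshift : θ * ((m + r : ℤ) : ℝ) = θ * m + (θ * r - round (θ * r)) + round (θ * r) := by
    push_cast
    ring
  rw [hshift, distNearestInt_add_intCast]
  exact distNearestInt_lt_of_abs_add_half_lt a (by rwa [mul_comm])

theorem stmt_18_general (lam β : ℝ)
    (hind : ∀ a b c : ℚ, (a : ℝ) + (b : ℝ) * β + (c : ℝ) * (lam * β) = 0 →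
      a = 0 ∧ b = 0 ∧ c = 0)
    (δ : ℝ)
    (E : Set ℕ)
    (hE : E = {m : ℕ | distNearestInt (β * (m : ℝ)) < δ ∧
      distNearestInt (lam * β * (m : ℝ)) < δ})
    (r : ℤ)
    (hr1 : distNearestInt (β * (r : ℝ)) < 2 * δ)
    (hr2 : distNearestInt (lam * β * (r : ℝ)) < 2 * δ) :
    ∃ m m' : ℕ, (m' : ℤ) = (m : ℤ) + r ∧ m ∈ E ∧ m' ∈ E := by
  have hv : IndepWithOne (β, lam * β) := fun a p q h => by
    obtain ⟨-, hp, hq⟩ := hind a p q (by exact_mod_cast h)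
    exact ⟨by exact_mod_cast hp, by exact_mod_cast hq⟩
  set x := β * r - round (β * (r : ℝ))
  set y := lam * β * r - round (lam * β * (r : ℝ))
  have hx : |x| < 2 * δ := hr1
  have hy : |y| < 2 * δ := hr2
  obtain ⟨m, hm, w, hw, hlt⟩ := hv.exists_int_ge_norm_smul_add_sub_lt (-(x / 2), -(y / 2))
    (lt_min (by linarith) (by linarith) : 0 < min (δ - |x| / 2) (δ - |y| / 2)) |r|
  obtain ⟨a, b, rfl⟩ := mem_intLattice.1 hw
  simp only [Prod.norm_def, Real.norm_eq_abs, max_lt_iff, lt_min_iff, Prod.fst_sub, Prod.snd_sub,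
    Prod.fst_add, Prod.snd_add, Prod.smul_fst, Prod.smul_snd, smul_eq_mul, sub_neg_eq_add] at hlt
  obtain ⟨hβm, hβm'⟩ := distNearestInt_mul_lt_and_mul_add_lt β m r a (δ := δ) (by linarith)
  obtain ⟨hlm, hlm'⟩ := distNearestInt_mul_lt_and_mul_add_lt (lam * β) m r b (δ := δ)
    (by linarith)
  lift m to ℕ using (abs_nonneg r).trans hm
  lift m + r to ℕ using by linarith [neg_abs_le r] with m' hm'
  rw [hE]
  exact ⟨m, m', hm', ⟨hβm, hlm⟩, by simpa using hβm', by simpa using hlm'⟩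

/-- Realizing differences in the Bohr set: if ‖β r‖ < 2δ and ‖λ β r‖ < 2δ,
then r is a difference of two elements of E. -/
theorem stmt_18 (lam β : ℝ) (hlam : Irrational lam) (hβ0 : 0 < β)
    (hind : ∀ a b c : ℚ, (a : ℝ) + (b : ℝ) * β + (c : ℝ) * (lam * β) = 0 →
      a = 0 ∧ b = 0 ∧ c = 0)
    (δ : ℝ) (hδ : 0 < δ)
    (E : Set ℕ)
    (hE : E = {m : ℕ | distNearestInt (β * (m : ℝ)) < δ ∧
      distNearestInt (lam * β * (m : ℝ)) < δ})
    (r : ℤ)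
    (hr1 : distNearestInt (β * (r : ℝ)) < 2 * δ)
    (hr2 : distNearestInt (lam * β * (r : ℝ)) < 2 * δ) :
    ∃ m m' : ℕ, (m' : ℤ) = (m : ℤ) + r ∧ m ∈ E ∧ m' ∈ E :=
  stmt_18_general lam β hind δ E hE r hr1 hr2
end
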